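/- arXiv:1305.4840 — 7 statements merged into one kernel-verified Lean document; each statement's English description precedes it below -/
import Mathlib

section
/- Let C and C' be linear codes in F_q^n with dim(C)=k and dim(C')=k', and suppose that the componentwise product code C*C' (the linear span of all coordinatewise products c*c' for c in C, c' in C') is nonzero. Then the minimum distance of C*C' satisfies dmin(C*C') ≤ max(1, n - k - k' + 2). -/
noncomputable section

/-- The componentwise product code of two linear codes. -/
def prodCode (F : Type*) [Field F] {n : ℕ}
    (C C' : Submodule F (Fin n → F)) : Submodule F (Fin n → F) :=
  Submodule.span F {z | ∃ c ∈ C, ∃ c' ∈ C', z = c * c'}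

/-- The t-fold componentwise power of a code (convention: 0th power is ⊤). -/
def powCode (F : Type*) [Field F] {n : ℕ} (C : Submodule F (Fin n → F)) :
    ℕ → Submodule F (Fin n → F)
  | 0 => ⊤
  | 1 => C
  | (t+2) => prodCode F (powCode F C (t+1)) C

/-- Minimum distance: minimum Hamming weight of a nonzero codeword. -/
def dmin {F : Type*} [Field F] [DecidableEq F] {n : ℕ}
    (C : Submodule F (Fin n → F)) : ℕ :=
  sInf {w | ∃ c ∈ C, c ≠ 0 ∧ hammingNorm c = w}

/-- The dual code with respect to the standard bilinear form. -/
def dualCode (F : Type*) [Field F] {n : ℕ}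
    (C : Submodule F (Fin n → F)) : Submodule F (Fin n → F) where
  carrier := {x | ∀ c ∈ C, ∑ i, x i * c i = 0}
  zero_mem' := by intro c hc; simp
  add_mem' := by
    intro a b ha hb c hc
    have h : ∑ i, (a + b) i * c i = (∑ i, a i * c i) + ∑ i, b i * c i := by
      simp [add_mul, Finset.sum_add_distrib]
    simp only [Set.mem_setOf_eq] at *
    rw [h, ha c hc, hb c hc, add_zero]
  smul_mem' := by
    intro r a ha c hc
    simp only [Pi.smul_apply, smul_eq_mul, mul_assoc, ← Finset.mul_sum, Set.mem_setOf_eq] at *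
    rw [ha c hc, mul_zero]

/-- A code has full support if every coordinate carries a nonzero codeword value. -/
def fullSupport (F : Type*) [Field F] {n : ℕ} (C : Submodule F (Fin n → F)) : Prop :=
  ∀ j, ∃ c ∈ C, c j ≠ 0

/-- Product code of a family of codes. -/
def prodFamily (F : Type*) [Field F] {n t : ℕ}
    (C : Fin t → Submodule F (Fin n → F)) : Submodule F (Fin n → F) :=
  Submodule.span F {z | ∃ c : Fin t → (Fin n → F), (∀ i, c i ∈ C i) ∧ z = ∏ i, c i}

/-! Induction on the length `n`. If `dim C + dim C' ≤ 2`, any nonzero word of `C * C'` will do.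
Otherwise we may assume `dim C' ≥ 2`; then some coordinate `j` leaves `C * C'ⱼ ≠ 0`, where `C'ⱼ`
is the subcode of `C'` vanishing at `j`. If `eⱼ ∈ C` while `C'` does not vanish at `j`, then
`eⱼ * c'` is a word of weight one. Otherwise puncturing `C` and `C'ⱼ` at `j` costs at most one
dimension in total, and the induction hypothesis applies to the punctured codes, whose product is
the puncture of `C * C'ⱼ ⊆ C * C'`. -/
open Module

theorem Submodule.finrank_map_add_finrank_inf_ker {K V W : Type*} [DivisionRing K]
    [AddCommGroup V] [Module K V] [AddCommGroup W] [Module K W] [FiniteDimensional K V]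
    (f : V →ₗ[K] W) (p : Submodule K V) :
    finrank K (p.map f) + finrank K ↥(p ⊓ LinearMap.ker f) = finrank K p := by
  rw [← LinearMap.range_domRestrict, ← Submodule.map_comap_subtype,
    Submodule.finrank_map_subtype_eq, ← LinearMap.ker_domRestrict]
  exact LinearMap.finrank_range_add_finrank_ker _

theorem hammingNorm_single {ι β : Type*} [Fintype ι] [DecidableEq ι] [Zero β] [DecidableEq β]
    (i : ι) {a : β} (ha : a ≠ 0) : hammingNorm (Pi.single i a : ι → β) = 1 := by
  simp [hammingNorm, Pi.single_apply, ha, Finset.filter_eq']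

section ProductCodes

variable {F : Type*} [Field F] {m n : ℕ}

theorem mul_mem_prodCode {C C' : Submodule F (Fin n → F)} {c c' : Fin n → F}
    (hc : c ∈ C) (hc' : c' ∈ C') : c * c' ∈ prodCode F C C' :=
  Submodule.subset_span ⟨c, hc, c', hc', rfl⟩

theorem prodCode_le {C C' E : Submodule F (Fin n → F)}
    (h : ∀ c ∈ C, ∀ c' ∈ C', c * c' ∈ E) : prodCode F C C' ≤ E := by
  rw [prodCode, Submodule.span_le]
  rintro _ ⟨c, hc, c', hc', rfl⟩
  exact h c hc c' hc'

theorem prodCode_comm (C C' : Submodule F (Fin n → F)) : prodCode F C C' = prodCode F C' C :=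
  le_antisymm (prodCode_le fun c hc c' hc' => mul_comm c c' ▸ mul_mem_prodCode hc' hc)
    (prodCode_le fun c hc c' hc' => mul_comm c c' ▸ mul_mem_prodCode hc' hc)

theorem prodCode_eq_bot_iff {C C' : Submodule F (Fin n → F)} :
    prodCode F C C' = ⊥ ↔ ∀ c ∈ C, ∀ c' ∈ C', c * c' = 0 := by
  refine ⟨fun h c hc c' hc' => ?_, fun h => eq_bot_iff.2 <| prodCode_le fun c hc c' hc' => ?_⟩
  · simpa [h] using mul_mem_prodCode hc hc'
  · simp [h c hc c' hc']

theorem map_funLeft_prodCode (g : Fin m → Fin n) (C C' : Submodule F (Fin n → F)) :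
    (prodCode F C C').map (LinearMap.funLeft F F g) =
      prodCode F (C.map (LinearMap.funLeft F F g)) (C'.map (LinearMap.funLeft F F g)) := by
  rw [prodCode, Submodule.map_span, prodCode]
  congr 1
  ext z
  constructor
  · rintro ⟨_, ⟨c, hc, c', hc', rfl⟩, rfl⟩
    exact ⟨_, ⟨c, hc, rfl⟩, _, ⟨c', hc', rfl⟩, rfl⟩
  · rintro ⟨_, ⟨c, hc, rfl⟩, _, ⟨c', hc', rfl⟩, rfl⟩
    exact ⟨c * c', ⟨c, hc, c', hc', rfl⟩, rfl⟩

end ProductCodes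

section Puncturing

variable (F : Type*) [Field F] {n : ℕ}

def puncture (j : Fin (n + 1)) : (Fin (n + 1) → F) →ₗ[F] (Fin n → F) :=
  LinearMap.funLeft F F j.succAbove

variable {F}

theorem puncture_apply (j : Fin (n + 1)) (x : Fin (n + 1) → F) (i : Fin n) :
    puncture F j x i = x (j.succAbove i) := rfl

theorem puncture_eq_zero_iff {j : Fin (n + 1)} {x : Fin (n + 1) → F} :
    puncture F j x = 0 ↔ x = Pi.single j (x j) := by
  constructor
  · intro h
    funext i
    rcases Fin.eq_self_or_eq_succAbove j i with rfl | ⟨i, rfl⟩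
    · simp
    · simpa [puncture_apply, Fin.succAbove_ne] using congrFun h i
  · intro h
    funext i
    rw [puncture_apply, h]
    simp [Fin.succAbove_ne]

theorem hammingNorm_puncture [DecidableEq F] {j : Fin (n + 1)} {x : Fin (n + 1) → F}
    (hx : x j = 0) : hammingNorm (puncture F j x) = hammingNorm x := by
  rw [hammingNorm, hammingNorm, Finset.card_filter, Finset.card_filter,
    Fin.sum_univ_succAbove _ j]
  simp only [hx, ne_eq, not_true_eq_false, if_false, zero_add, puncture_apply]
  rfl

theorem ker_puncture_le (j : Fin (n + 1)) :
    LinearMap.ker (puncture F j) ≤ F ∙ Pi.single j 1 := by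
  intro x hx
  rw [LinearMap.mem_ker, puncture_eq_zero_iff] at hx
  rw [Submodule.mem_span_singleton]
  exact ⟨x j, by rw [← Pi.single_smul', smul_eq_mul, mul_one, ← hx]⟩

theorem finrank_le_finrank_map_puncture_add_one (j : Fin (n + 1))
    (C : Submodule F (Fin (n + 1) → F)) :
    finrank F C ≤ finrank F (C.map (puncture F j)) + 1 := by
  have hker : finrank F ↥(C ⊓ LinearMap.ker (puncture F j)) ≤ 1 :=
    (Submodule.finrank_mono (inf_le_right.trans (ker_puncture_le j))).trans
      (finrank_span_singleton (by simp)).le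
  have := C.finrank_map_add_finrank_inf_ker (puncture F j)
  omega

theorem finrank_map_puncture_of_single_notMem {j : Fin (n + 1)}
    {C : Submodule F (Fin (n + 1) → F)} (h : Pi.single j 1 ∉ C) :
    finrank F (C.map (puncture F j)) = finrank F C := by
  have hker : C ⊓ LinearMap.ker (puncture F j) = ⊥ := by
    refine eq_bot_iff.2 fun x ⟨hxC, hx⟩ => ?_
    rw [SetLike.mem_coe, LinearMap.mem_ker, puncture_eq_zero_iff] at hx
    by_cases hxj : x j = 0
    · rw [Submodule.mem_bot, hx, hxj, Pi.single_zero]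
    · refine absurd ?_ h
      have : Pi.single j 1 = (x j)⁻¹ • x :=
        calc Pi.single j 1 = (x j)⁻¹ • Pi.single j (x j) := by
              rw [← Pi.single_smul', smul_eq_mul, inv_mul_cancel₀ hxj]
          _ = (x j)⁻¹ • x := by rw [← hx]
      exact this ▸ C.smul_mem _ hxC
  have := C.finrank_map_add_finrank_inf_ker (puncture F j)
  rwa [hker, finrank_bot, add_zero] at this

theorem map_puncture_ne_bot {j : Fin (n + 1)} {D : Submodule F (Fin (n + 1) → F)}
    (hj : Pi.single j 1 ∉ D) (hD : D ≠ ⊥) : D.map (puncture F j) ≠ ⊥ := by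
  rwa [Ne, ← Submodule.finrank_eq_zero, finrank_map_puncture_of_single_notMem hj,
    Submodule.finrank_eq_zero]

end Puncturing

section VanishingSubcode

variable {F : Type*} [Field F] {n : ℕ}

def vanishingAt (C : Submodule F (Fin n → F)) (j : Fin n) : Submodule F (Fin n → F) :=
  C ⊓ LinearMap.ker (LinearMap.proj j)

theorem mem_vanishingAt {C : Submodule F (Fin n → F)} {j : Fin n} {x : Fin n → F} :
    x ∈ vanishingAt C j ↔ x ∈ C ∧ x j = 0 :=
  Iff.rfl

theorem vanishingAt_eq_self {C : Submodule F (Fin n → F)} {j : Fin n} (h : ∀ c ∈ C, c j = 0) :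
    vanishingAt C j = C :=
  inf_eq_left.2 fun c hc => h c hc

theorem single_notMem_vanishingAt (C : Submodule F (Fin n → F)) (j : Fin n) :
    Pi.single j 1 ∉ vanishingAt C j := fun h => by simpa using h.2

theorem finrank_le_finrank_vanishingAt_add_one (C : Submodule F (Fin n → F)) (j : Fin n) :
    finrank F C ≤ finrank F (vanishingAt C j) + 1 := by
  have hmap : finrank F (C.map (LinearMap.proj j)) ≤ 1 :=
    (Submodule.finrank_le _).trans_eq (finrank_self F)
  have := C.finrank_map_add_finrank_inf_ker (LinearMap.proj j)
  rw [vanishingAt]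
  omega

theorem prodCode_vanishingAt_le (C C' : Submodule F (Fin n → F)) (j : Fin n) :
    prodCode F C (vanishingAt C' j) ≤ vanishingAt (prodCode F C C') j :=
  prodCode_le fun _ hc _ hc' =>
    ⟨mul_mem_prodCode hc hc'.1, by simp [(mem_vanishingAt.1 hc').2]⟩

theorem exists_prodCode_vanishingAt_ne_bot {C C' : Submodule F (Fin n → F)}
    (hk' : 2 ≤ finrank F C') (hne : prodCode F C C' ≠ ⊥) :
    ∃ j, prodCode F C (vanishingAt C' j) ≠ ⊥ := by
  obtain ⟨c, hc, c', hc', hcc'⟩ : ∃ c ∈ C, ∃ c' ∈ C', c * c' ≠ 0 := by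
    simpa [prodCode_eq_bot_iff] using hne
  obtain ⟨i, hi⟩ := Function.ne_iff.1 hcc'
  obtain ⟨b, hb, hb0⟩ := Submodule.exists_mem_ne_zero_of_ne_bot fun h : vanishingAt C' i = ⊥ => by
    have := finrank_le_finrank_vanishingAt_add_one C' i
    rw [h, finrank_bot] at this
    omega
  obtain ⟨j, hbj⟩ := Function.ne_iff.1 hb0
  refine ⟨j, fun h => hi ?_⟩
  -- `b'` agrees with `c'` at `i` (where `b` vanishes) and vanishes at `j`
  set b' := c' - (c' j / b j) • b
  have hb' : b' ∈ vanishingAt C' j :=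
    ⟨sub_mem hc' (C'.smul_mem _ (mem_vanishingAt.1 hb).1), by simp [b', div_mul_cancel₀ _ hbj]⟩
  have hi' : (c * b') i = (c * c') i := by simp [b', (mem_vanishingAt.1 hb).2]
  rw [← hi', prodCode_eq_bot_iff.1 h c hc b' hb', Pi.zero_apply]

theorem finrank_add_finrank_le_finrank_map_puncture_add_one
    {C C' : Submodule F (Fin (n + 1) → F)} {j : Fin (n + 1)}
    (hj : ¬(Pi.single j 1 ∈ C ∧ ∃ c' ∈ C', c' j ≠ 0)) :
    finrank F C + finrank F C' ≤ finrank F (C.map (puncture F j)) +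
      finrank F ((vanishingAt C' j).map (puncture F j)) + 1 := by
  rw [finrank_map_puncture_of_single_notMem (single_notMem_vanishingAt C' j)]
  rcases not_and_or.1 hj with hj | hC'
  · rw [finrank_map_puncture_of_single_notMem hj]
    have := finrank_le_finrank_vanishingAt_add_one C' j
    omega
  · push Not at hC'
    rw [vanishingAt_eq_self hC']
    have := finrank_le_finrank_map_puncture_add_one j C
    omega

end VanishingSubcode

section ProductSingletonBound

variable {F : Type*} [Field F] [DecidableEq F]

theorem dmin_le_hammingNorm {n : ℕ} {C : Submodule F (Fin n → F)} {z : Fin n → F} (hz : z ∈ C)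
    (hz0 : z ≠ 0) : dmin C ≤ hammingNorm z :=
  Nat.sInf_le ⟨z, hz, hz0, rfl⟩

theorem exists_mem_prodCode_hammingNorm_le_of_finrank_add_le_two {n : ℕ}
    {C C' : Submodule F (Fin n → F)} (hne : prodCode F C C' ≠ ⊥)
    (hk : finrank F C + finrank F C' ≤ 2) :
    ∃ z ∈ prodCode F C C', z ≠ 0 ∧
      (hammingNorm z : ℤ) ≤ max 1 ((n : ℤ) - finrank F C - finrank F C' + 2) := by
  obtain ⟨z, hz, hz0⟩ := Submodule.exists_mem_ne_zero_of_ne_bot hne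
  refine ⟨z, hz, hz0, le_max_of_le_right ?_⟩
  have : hammingNorm z ≤ n := (hammingNorm_le_card_fintype).trans_eq (Fintype.card_fin n)
  omega

theorem exists_mem_prodCode_hammingNorm_eq_one {n : ℕ} {C C' : Submodule F (Fin n → F)}
    {j : Fin n} (hj : Pi.single j 1 ∈ C) {c' : Fin n → F} (hc' : c' ∈ C') (hc'j : c' j ≠ 0) :
    ∃ z ∈ prodCode F C C', z ≠ 0 ∧ hammingNorm z = 1 := by
  refine ⟨Pi.single j (c' j), ?_, by simpa using hc'j, hammingNorm_single j hc'j⟩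
  simpa [← Pi.single_mul_left] using mul_mem_prodCode hj hc'

theorem exists_mem_prodCode_hammingNorm_le :
    ∀ {n : ℕ} (C C' : Submodule F (Fin n → F)), prodCode F C C' ≠ ⊥ →
      ∃ z ∈ prodCode F C C', z ≠ 0 ∧
        (hammingNorm z : ℤ) ≤ max 1 ((n : ℤ) - finrank F C - finrank F C' + 2) := by
  intro n
  induction n with
  | zero =>
    intro C C' hne
    refine exists_mem_prodCode_hammingNorm_le_of_finrank_add_le_two hne ?_
    have hC := Submodule.finrank_le C
    have hC' := Submodule.finrank_le C'
    simp only [finrank_fin_fun] at hC hC'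
    omega
  | succ n ih =>
    intro C C' hne
    by_cases hsmall : finrank F C + finrank F C' ≤ 2
    · exact exists_mem_prodCode_hammingNorm_le_of_finrank_add_le_two hne hsmall
    wlog hk' : 2 ≤ finrank F C' generalizing C C'
    · obtain ⟨z, hz, hz0, hzw⟩ := this C' C (prodCode_comm C C' ▸ hne) (by omega) (by omega)
      exact ⟨z, prodCode_comm C' C ▸ hz, hz0, by rwa [sub_right_comm _ (finrank F C' : ℤ)] at hzw⟩
    obtain ⟨j, hj⟩ := exists_prodCode_vanishingAt_ne_bot hk' hne
    by_cases hweight : Pi.single j 1 ∈ C ∧ ∃ c' ∈ C', c' j ≠ 0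
    · obtain ⟨hej, c', hc', hc'j⟩ := hweight
      obtain ⟨z, hz, hz0, hzw⟩ := exists_mem_prodCode_hammingNorm_eq_one hej hc' hc'j
      exact ⟨z, hz, hz0, by rw [hzw]; exact le_max_left _ _⟩
    have hdim := finrank_add_finrank_le_finrank_map_puncture_add_one hweight
    have hvan := prodCode_vanishingAt_le C C' j
    have hprod := map_funLeft_prodCode j.succAbove C (vanishingAt C' j)
    obtain ⟨z', hz', hz'0, hz'w⟩ :=
      ih (C.map (puncture F j)) ((vanishingAt C' j).map (puncture F j)) <| hprod ▸
        map_puncture_ne_bot (fun h => single_notMem_vanishingAt _ j (hvan h)) hj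
    obtain ⟨z, hz, rfl⟩ := Submodule.map_mono hvan (hprod ▸ hz')
    refine ⟨z, hz.1, fun h => hz'0 (by simp [h]), ?_⟩
    rw [← hammingNorm_puncture (mem_vanishingAt.1 hz).2]
    refine hz'w.trans (max_le_max le_rfl ?_)
    push_cast
    omega

end ProductSingletonBound

theorem stmt0_general {F : Type*} [Field F] [DecidableEq F] {n k k' : ℕ}
    (C C' : Submodule F (Fin n → F))
    (hk : Module.finrank F C = k) (hk' : Module.finrank F C' = k')
    (hne : prodCode F C C' ≠ ⊥) :
    (dmin (prodCode F C C') : ℤ) ≤ max 1 ((n : ℤ) - k - k' + 2) := by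
  obtain ⟨z, hz, hz0, hzw⟩ := exists_mem_prodCode_hammingNorm_le C C' hne
  subst hk hk'
  exact (Nat.cast_le.2 (dmin_le_hammingNorm hz hz0)).trans hzw

theorem stmt0 {F : Type*} [Field F] [Fintype F] [DecidableEq F] {n k k' : ℕ}
    (C C' : Submodule F (Fin n → F))
    (hk : Module.finrank F C = k) (hk' : Module.finrank F C' = k')
    (hne : prodCode F C C' ≠ ⊥) :
    (dmin (prodCode F C C') : ℤ) ≤ max 1 ((n : ℤ) - k - k' + 2) :=
  stmt0_general C C' hk hk' hne
end
end

section
/- Let C_1, ..., C_t ⊆ F_q^n be linear codes of dimensions k_1, ..., k_t, all with full support, and suppose k_1 + ... + k_t > n. Then there exist codewords c_i ∈ C_i such that the componentwise product c_1 * c_2 * ... * c_t has Hamming weight w satisfying 1 ≤ w ≤ t - 1. -/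
noncomputable section

/-!
Generalize from all coordinates to a set `S` of coordinates that determines every codeword and on
which every code has full support, and induct on `S`, keeping `#S < ∑ i, dim C i`.
Call `j'` parallel to `j` for a code when its words vanishing at `j` are exactly those vanishing
at `j'`. If some code has a nonzero word of weight `< t` on `S`, take the other factors nonzero at
one point of its support. Otherwise, if some code `C i₀` has a parallel class `D` of fewer than `t`
coordinates, shorten `C i₀` at a point of `D` and delete `D` from `S`: the shortened code vanishes
on `D`, the other codes are still determined on `S \ D` because their nonzero words have weight
at least `t > #D`, and the dimension drops by exactly one while `#S` drops by at least one.
If every parallel class has at least `t` coordinates, one coordinate per class determines a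
codeword, so `t * dim C i ≤ #S` for every `i`, contradicting `#S < ∑ i, dim C i`.
-/

open Module Finset

section

variable {F ι : Type*} [Field F]

def shortening (C : Submodule F (ι → F)) (j : ι) : Submodule F (ι → F) :=
  C ⊓ LinearMap.ker (LinearMap.proj j)

lemma mem_shortening {C : Submodule F (ι → F)} {j : ι} {c : ι → F} :
    c ∈ shortening C j ↔ c ∈ C ∧ c j = 0 :=
  Iff.rfl

lemma finrank_shortening_add_one [Finite ι] {C : Submodule F (ι → F)} {j : ι}
    (hj : ∃ c ∈ C, c j ≠ 0) : finrank F (shortening C j) + 1 = finrank F C := by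
  set f : Dual F C := LinearMap.proj j ∘ₗ C.subtype
  have hf : f ≠ 0 := by
    obtain ⟨c, hc, hcj⟩ := hj
    exact fun h => hcj (LinearMap.congr_fun h ⟨c, hc⟩)
  have hker : (LinearMap.ker f).map C.subtype = shortening C j := by
    ext c
    simp [mem_shortening, f, and_comm]
  rw [← hker, Submodule.finrank_map_subtype_eq]
  exact f.finrank_ker_add_one_of_ne_zero hf

lemma shortening_eq_of_le [Finite ι] {C : Submodule F (ι → F)} {j j' : ι}
    (hj : ∃ c ∈ C, c j ≠ 0) (hj' : ∃ c ∈ C, c j' ≠ 0)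
    (h : shortening C j ≤ shortening C j') : shortening C j = shortening C j' :=
  Submodule.eq_of_le_of_finrank_eq h <| by
    have := finrank_shortening_add_one hj
    have := finrank_shortening_add_one hj'
    omega

lemma finrank_le_card_of_eq_zero_on {C : Submodule F (ι → F)} {R : Finset ι}
    (h : ∀ c ∈ C, (∀ j ∈ R, c j = 0) → c = 0) : finrank F C ≤ #R := by
  set φ := LinearMap.funLeft F F ((↑) : R → ι) ∘ₗ C.subtype
  have hφ : Function.Injective φ := by
    rw [← LinearMap.ker_eq_bot, LinearMap.ker_eq_bot']
    intro c hc
    exact Subtype.ext <| h c c.2 fun j hj => congr_fun hc ⟨j, hj⟩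
  simpa using LinearMap.finrank_le_finrank_of_injective hφ

open Classical in
def parallelClass (C : Submodule F (ι → F)) (S : Finset ι) (j : ι) : Finset ι :=
  {j' ∈ S | shortening C j' = shortening C j}

lemma mem_parallelClass {C : Submodule F (ι → F)} {S : Finset ι} {j j' : ι} :
    j' ∈ parallelClass C S j ↔ j' ∈ S ∧ shortening C j' = shortening C j := by
  simp [parallelClass]

lemma eq_zero_of_mem_shortening_of_mem_parallelClass {C : Submodule F (ι → F)} {S : Finset ι}
    {j j' : ι} {c : ι → F} (hc : c ∈ shortening C j) (hj' : j' ∈ parallelClass C S j) :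
    c j' = 0 :=
  (mem_shortening.mp ((mem_parallelClass.mp hj').2 ▸ hc)).2

lemma exists_mem_shortening_ne_zero [Finite ι] [DecidableEq ι] {C : Submodule F (ι → F)}
    {S : Finset ι} (hfull : ∀ j ∈ S, ∃ c ∈ C, c j ≠ 0) {j₀ j : ι} (hj₀ : j₀ ∈ S)
    (hj : j ∈ S \ parallelClass C S j₀) : ∃ c ∈ shortening C j₀, c j ≠ 0 := by
  obtain ⟨hjS, hjD⟩ := mem_sdiff.mp hj
  by_contra! h
  have hle : shortening C j₀ ≤ shortening C j := fun c hc =>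
    mem_shortening.mpr ⟨(mem_shortening.mp hc).1, h c hc⟩
  exact hjD <| mem_parallelClass.mpr
    ⟨hjS, (shortening_eq_of_le (hfull j₀ hj₀) (hfull j hjS) hle).symm⟩

lemma mul_finrank_le_card {C : Submodule F (ι → F)} {S : Finset ι} {m : ℕ}
    (hinj : ∀ c ∈ C, (∀ j ∈ S, c j = 0) → c = 0)
    (hclass : ∀ j ∈ S, m ≤ #(parallelClass C S j)) : m * finrank F C ≤ #S := by
  classical
  set f := shortening C
  obtain ⟨R, -, hRinj, hRimg⟩ :=
    exists_subset_injOn_image_eq_of_surjOn (S : Set ι) (S.image f) fun H hH => by simpa using hH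
  have hR : finrank F C ≤ #R := finrank_le_card_of_eq_zero_on fun c hc hcR => hinj c hc fun j hj => by
    obtain ⟨r, hr, hrj⟩ := mem_image.mp (hRimg ▸ mem_image_of_mem f hj)
    have hcj : c ∈ f j := hrj ▸ mem_shortening.mpr ⟨hc, hcR r hr⟩
    exact (mem_shortening.mp hcj).2
  have himg : m * #(S.image f) ≤ #S := by
    rw [card_eq_sum_card_image f S, mul_comm, ← smul_eq_mul, ← sum_const]
    refine sum_le_sum fun H hH => ?_
    obtain ⟨j, hj, rfl⟩ := mem_image.mp hH
    exact (hclass j hj).trans_eq (congrArg card (by ext; simp [mem_parallelClass, f]))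
  rw [← hRimg, card_image_of_injOn hRinj] at himg
  exact (Nat.mul_le_mul_left m hR).trans himg

section weight

variable [DecidableEq F]

def weightOn (S : Finset ι) (x : ι → F) : ℕ :=
  #{j ∈ S | x j ≠ 0}

lemma weightOn_mono {S : Finset ι} {x y : ι → F} (h : ∀ j ∈ S, x j ≠ 0 → y j ≠ 0) :
    weightOn S x ≤ weightOn S y :=
  card_le_card fun j hj => by
    simp only [mem_filter] at hj ⊢
    exact ⟨hj.1, h j hj.1 hj.2⟩

lemma weightOn_le_card {S D : Finset ι} {x : ι → F} (h : ∀ j ∈ S, x j ≠ 0 → j ∈ D) :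
    weightOn S x ≤ #D :=
  card_le_card fun j hj => h j (mem_filter.mp hj).1 (mem_filter.mp hj).2

lemma weightOn_pos {S : Finset ι} {x : ι → F} {j : ι} (hj : j ∈ S) (hx : x j ≠ 0) :
    0 < weightOn S x :=
  card_pos.mpr ⟨j, mem_filter.mpr ⟨hj, hx⟩⟩

lemma weightOn_sdiff [DecidableEq ι] {S D : Finset ι} {x : ι → F} (h : ∀ j ∈ D, x j = 0) :
    weightOn (S \ D) x = weightOn S x := by
  unfold weightOn
  congr 1
  ext j
  simp only [mem_filter, mem_sdiff]
  exact ⟨fun hj => ⟨hj.1.1, hj.2⟩, fun hj => ⟨⟨hj.1, fun hjD => hj.2 (h j hjD)⟩, hj.2⟩⟩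

lemma weightOn_univ [Fintype ι] (x : ι → F) : weightOn univ x = hammingNorm x :=
  rfl

end weight

lemma exists_prod_apply_ne_zero_and_support_subset {κ : Type*} [Fintype κ] [DecidableEq κ]
    {C : κ → Submodule F (ι → F)} {i : κ} {w : ι → F} (hw : w ∈ C i) {x : ι} (hx : w x ≠ 0)
    (hfull : ∀ l, ∃ v ∈ C l, v x ≠ 0) :
    ∃ c : κ → ι → F, (∀ l, c l ∈ C l) ∧ (∏ l, c l) x ≠ 0 ∧ ∀ j, (∏ l, c l) j ≠ 0 → w j ≠ 0 := by
  choose v hvC hvx using hfull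
  refine ⟨Function.update v i w, fun l => ?_, ?_, fun j hj hwj => hj ?_⟩
  · rcases eq_or_ne l i with rfl | hl <;> simp [*]
  · rw [prod_apply]
    exact prod_ne_zero_iff.mpr fun l _ => by rcases eq_or_ne l i with rfl | hl <;> simp [*]
  · rw [prod_apply]
    exact prod_eq_zero (mem_univ i) (by simpa)

lemma update_shortening_le {κ : Type*} [DecidableEq κ] (C : κ → Submodule F (ι → F)) (i₀ : κ)
    (j₀ : ι) (i : κ) : Function.update C i₀ (shortening (C i₀) j₀) i ≤ C i := by
  rcases eq_or_ne i i₀ with rfl | hi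
  · rw [Function.update_self]
    exact inf_le_left
  · rw [Function.update_of_ne hi]

lemma weightOn_sdiff_parallelClass_prod [DecidableEq ι] [DecidableEq F] {κ : Type*} [Fintype κ]
    {C : Submodule F (ι → F)} {S : Finset ι} {j₀ : ι} {c : κ → ι → F} {i₀ : κ}
    (hc : c i₀ ∈ shortening C j₀) :
    weightOn (S \ parallelClass C S j₀) (∏ i, c i) = weightOn S (∏ i, c i) :=
  weightOn_sdiff fun j hj => by
    rw [prod_apply]
    exact prod_eq_zero (mem_univ i₀) (eq_zero_of_mem_shortening_of_mem_parallelClass hc hj)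

lemma eq_zero_of_mem_shortening_of_eq_zero_on_sdiff [DecidableEq ι] {C : Submodule F (ι → F)}
    {S : Finset ι} (hinj : ∀ c ∈ C, (∀ j ∈ S, c j = 0) → c = 0) {j₀ : ι} {c : ι → F}
    (hc : c ∈ shortening C j₀) (hcz : ∀ j ∈ S \ parallelClass C S j₀, c j = 0) : c = 0 :=
  hinj c (mem_shortening.mp hc).1 fun j hj => by
    by_cases hjD : j ∈ parallelClass C S j₀
    · exact eq_zero_of_mem_shortening_of_mem_parallelClass hc hjD
    · exact hcz j (mem_sdiff.mpr ⟨hj, hjD⟩)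

lemma eq_zero_of_eq_zero_on_sdiff [DecidableEq ι] [DecidableEq F] {S D : Finset ι} {m : ℕ}
    {c : ι → F} (hc : c ≠ 0 → m ≤ weightOn S c) (hD : #D < m)
    (hcz : ∀ j ∈ S \ D, c j = 0) : c = 0 := by
  by_contra hc0
  have hwt : weightOn S c ≤ #D := weightOn_le_card fun j hj hcj => by
    by_contra hjD
    exact hcj (hcz j (mem_sdiff.mpr ⟨hj, hjD⟩))
  exact absurd (hc hc0) (by omega)

lemma sum_finrank_update_add_one {κ : Type*} [Fintype κ] [DecidableEq κ]
    (C : κ → Submodule F (ι → F)) {i₀ : κ} {C₀ : Submodule F (ι → F)}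
    (h : finrank F C₀ + 1 = finrank F (C i₀)) :
    ∑ i, finrank F (Function.update C i₀ C₀ i) + 1 = ∑ i, finrank F (C i) := by
  simp only [Function.apply_update (fun _ (X : Submodule F (ι → F)) => finrank F X),
    sum_update_of_mem (mem_univ i₀), ← add_sum_erase _ _ (mem_univ i₀), ← h]
  rw [sdiff_singleton_eq_erase]
  omega

lemma sum_finrank_le_card {κ : Type*} [Fintype κ] {C : κ → Submodule F (ι → F)} {S : Finset ι}
    (hinj : ∀ i, ∀ c ∈ C i, (∀ j ∈ S, c j = 0) → c = 0)
    (hclass : ∀ i, ∀ j ∈ S, Fintype.card κ ≤ #(parallelClass (C i) S j)) :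
    ∑ i, finrank F (C i) ≤ #S := by
  rcases isEmpty_or_nonempty κ with hκ | hκ
  · simp
  have hsum : Fintype.card κ * ∑ i, finrank F (C i) ≤ Fintype.card κ * #S := by
    simpa [mul_sum] using sum_le_sum fun i (_ : i ∈ univ) => mul_finrank_le_card (hinj i) (hclass i)
  exact Nat.le_of_mul_le_mul_left hsum Fintype.card_pos

theorem exists_prod_weightOn_pos_lt_card [Finite ι] [DecidableEq ι] [DecidableEq F]
    {κ : Type*} [Fintype κ] [DecidableEq κ] (S : Finset ι) (C : κ → Submodule F (ι → F))
    (hinj : ∀ i, ∀ c ∈ C i, (∀ j ∈ S, c j = 0) → c = 0)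
    (hfull : ∀ i, ∀ j ∈ S, ∃ c ∈ C i, c j ≠ 0)
    (hdim : #S < ∑ i, finrank F (C i)) :
    ∃ c : κ → ι → F, (∀ i, c i ∈ C i) ∧
      0 < weightOn S (∏ i, c i) ∧ weightOn S (∏ i, c i) < Fintype.card κ := by
  induction S using Finset.strongInduction generalizing C with
  | H S ih =>
  by_cases hW : ∃ i, ∃ w ∈ C i, w ≠ 0 ∧ weightOn S w < Fintype.card κ
  · obtain ⟨i, w, hw, hw0, hwS⟩ := hW
    obtain ⟨x, hxS, hx⟩ : ∃ x ∈ S, w x ≠ 0 := by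
      by_contra! h
      exact hw0 (hinj i w hw h)
    obtain ⟨c, hc, hcx, hsupp⟩ :=
      exists_prod_apply_ne_zero_and_support_subset hw hx fun l => hfull l x hxS
    exact ⟨c, hc, weightOn_pos hxS hcx, (weightOn_mono fun j _ => hsupp j).trans_lt hwS⟩
  push Not at hW
  by_cases hR : ∃ i₀, ∃ j₀ ∈ S, #(parallelClass (C i₀) S j₀) < Fintype.card κ
  · obtain ⟨i₀, j₀, hj₀, hD⟩ := hR
    set D := parallelClass (C i₀) S j₀
    set C' := Function.update C i₀ (shortening (C i₀) j₀)
    have hC'₀ : C' i₀ = shortening (C i₀) j₀ := Function.update_self ..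
    have hC' : ∀ i ≠ i₀, C' i = C i := fun i hi => Function.update_of_ne hi ..
    have hSD : S \ D ⊂ S := sdiff_ssubset (filter_subset _ _) ⟨j₀, mem_parallelClass.mpr ⟨hj₀, rfl⟩⟩
    have hinj' : ∀ i, ∀ c ∈ C' i, (∀ j ∈ S \ D, c j = 0) → c = 0 := by
      intro i c hc hcz
      rcases eq_or_ne i i₀ with rfl | hi
      · exact eq_zero_of_mem_shortening_of_eq_zero_on_sdiff (hinj i) (hC'₀ ▸ hc) hcz
      · exact eq_zero_of_eq_zero_on_sdiff (hW i c (hC' i hi ▸ hc)) hD hcz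
    have hfull' : ∀ i, ∀ j ∈ S \ D, ∃ c ∈ C' i, c j ≠ 0 := by
      intro i j hj
      rcases eq_or_ne i i₀ with rfl | hi
      · exact hC'₀ ▸ exists_mem_shortening_ne_zero (hfull i) hj₀ hj
      · exact hC' i hi ▸ hfull i j (mem_sdiff.mp hj).1
    have hdim' : #(S \ D) < ∑ i, finrank F (C' i) := by
      have : ∑ i, finrank F (C' i) + 1 = ∑ i, finrank F (C i) :=
        sum_finrank_update_add_one C (finrank_shortening_add_one (hfull i₀ j₀ hj₀))
      have := card_lt_card hSD
      omega
    obtain ⟨c, hc, hpos, hlt⟩ := ih (S \ D) hSD C' hinj' hfull' hdim'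
    rw [weightOn_sdiff_parallelClass_prod (hC'₀ ▸ hc i₀)] at hpos hlt
    exact ⟨c, fun i => update_shortening_le C i₀ j₀ i (hc i), hpos, hlt⟩
  · push Not at hR
    exact absurd (sum_finrank_le_card hinj hR) (not_le.mpr hdim)

end

theorem stmt3_general {F : Type*} [Field F] [DecidableEq F] {n t : ℕ}
    (C : Fin t → Submodule F (Fin n → F))
    (hfs : ∀ i, fullSupport F (C i))
    (hdim : n < ∑ i, Module.finrank F (C i)) :
    ∃ c : Fin t → (Fin n → F), (∀ i, c i ∈ C i) ∧
      1 ≤ hammingNorm (∏ i, c i) ∧ hammingNorm (∏ i, c i) ≤ t - 1 := by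
  obtain ⟨c, hc, hpos, hlt⟩ := exists_prod_weightOn_pos_lt_card univ C
    (fun _ c _ hc => funext fun j => hc j (mem_univ j)) (fun i j _ => hfs i j) (by simpa using hdim)
  simp only [weightOn_univ, Fintype.card_fin] at hpos hlt
  exact ⟨c, hc, hpos, by omega⟩

theorem stmt3 {F : Type*} [Field F] [Fintype F] [DecidableEq F] {n t : ℕ}
    (C : Fin t → Submodule F (Fin n → F))
    (hfs : ∀ i, fullSupport F (C i))
    (hdim : n < ∑ i, Module.finrank F (C i)) :
    ∃ c : Fin t → (Fin n → F), (∀ i, c i ∈ C i) ∧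
      1 ≤ hammingNorm (∏ i, c i) ∧ hammingNorm (∏ i, c i) ≤ t - 1 :=
  stmt3_general C hfs hdim

end
end

section
/- Let t ≥ 1 and let C_1, ..., C_t ⊆ F_q^n be linear codes of dimensions k_1, ..., k_t, all with full support, such that the product code C_1*...*C_t is nonzero. Then there exist codewords c_i ∈ C_i with 1 ≤ w(c_1*...*c_t) ≤ max(t-1, n + t - (k_1 + ... + k_t)), where w denotes Hamming weight. -/
noncomputable section

/-!
Induct on the length `n`. If some `C i` contains a nonzero word `w` of weight at most the
bound, multiplying `w` by words of the other codes that are nonzero at one point of its support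
gives a nonzero product no heavier than `w`. Otherwise every nonzero codeword is heavy, so
puncturing at a few coordinates keeps all dimensions.

If `∑ kᵢ ≤ n`, puncture at one coordinate: the bound for length `n - 1`, plus the one coordinate
lost, is still at most `n + t - ∑ kᵢ`.

If `∑ kᵢ > n`, call coordinates `j, j'` equivalent for `C i` when the same codewords vanish at
both. A code injects into functions on its classes, so if all classes had at least `t` elements we
would get `t kᵢ ≤ n` for every `i`. Hence some class `K` of a coordinate `j₀` for `C i₀` has fewer
than `t` elements. Shorten `C i₀` at `j₀` and puncture every code at `K`: the length drops by
`|K|`, the total dimension by one, and the induction gives a product of weight at most `t - 1`.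
Its lift has the same weight, because the words of the shortened code vanish on all of `K`.
-/

open Module Finset

namespace ProductCode

variable {F : Type*} [Field F] {ι : Type*}

lemma finrank_map_add_finrank_inf_ker {M N : Type*} [AddCommGroup M] [Module F M]
    [FiniteDimensional F M] [AddCommGroup N] [Module F N] (φ : M →ₗ[F] N) (C : Submodule F M) :
    finrank F (C.map φ) + finrank F ↥(C ⊓ LinearMap.ker φ) = finrank F C := by
  have h := LinearMap.finrank_range_add_finrank_ker (φ.domRestrict C)
  rwa [LinearMap.range_domRestrict, LinearMap.ker_domRestrict,
    (Submodule.equivMapOfInjective _ C.injective_subtype _).finrank_eq,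
    Submodule.map_comap_subtype] at h

lemma finrank_inf_ker_proj_add_one [Fintype ι] {C : Submodule F (ι → F)} {j : ι}
    (hj : ∃ c ∈ C, c j ≠ 0) :
    finrank F ↥(C ⊓ LinearMap.ker (LinearMap.proj j)) + 1 = finrank F C := by
  have hmap : finrank F (C.map (LinearMap.proj j)) = 1 := by
    obtain ⟨c, hc, hcj⟩ := hj
    have hne : C.map (LinearMap.proj j) ≠ ⊥ :=
      (Submodule.ne_bot_iff _).2 ⟨c j, Submodule.mem_map_of_mem hc, hcj⟩
    have := Submodule.finrank_le (C.map (LinearMap.proj (R := F) (φ := fun _ : ι => F) j))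
    rw [Module.finrank_self] at this
    have := mt Submodule.finrank_eq_zero.1 hne
    omega
  have := finrank_map_add_finrank_inf_ker (LinearMap.proj j) C
  omega

section Puncture

variable (K : Finset ι)

def puncture : (ι → F) →ₗ[F] ({j // j ∉ K} → F) := LinearMap.funLeft F F Subtype.val

@[simp]
lemma puncture_apply (x : ι → F) (j : {j // j ∉ K}) : puncture K x j = x j := rfl

lemma puncture_prod {t : ℕ} (x : Fin t → ι → F) :
    puncture K (∏ i, x i) = ∏ i, puncture K (x i) := by
  ext j
  simp [Finset.prod_apply]

lemma exists_prod_eq_of_mem_map_puncture {t : ℕ} {E : Fin t → Submodule F (ι → F)}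
    {c : Fin t → {j // j ∉ K} → F} (hc : ∀ i, c i ∈ (E i).map (puncture K)) :
    ∃ x : Fin t → ι → F, (∀ i, x i ∈ E i) ∧ puncture K (∏ i, x i) = ∏ i, c i := by
  choose x hx hxc using hc
  exact ⟨x, hx, by simp only [puncture_prod, hxc]⟩

variable [Fintype ι] [DecidableEq ι] [DecidableEq F]

lemma hammingNorm_eq_hammingNorm_puncture_add (x : ι → F) :
    hammingNorm x = hammingNorm (puncture K x) + #{j ∈ K | x j ≠ 0} := by
  have h1 : hammingNorm (puncture K x) = #{j | j ∉ K ∧ x j ≠ 0} := by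
    rw [hammingNorm, ← Fintype.card_subtype, ← Fintype.card_subtype]
    exact Fintype.card_congr (Equiv.subtypeSubtypeEquivSubtypeInter (· ∉ K) (x · ≠ 0))
  rw [h1, hammingNorm, ← Finset.card_union_of_disjoint]
  · congr 1; ext j; by_cases j ∈ K <;> simp [*]
  · simp +contextual [Finset.disjoint_left]

lemma finrank_map_puncture {C : Submodule F (ι → F)}
    (hC : ∀ x ∈ C, x ≠ 0 → #K < hammingNorm x) :
    finrank F (C.map (puncture K)) = finrank F C := by
  have hker : C ⊓ LinearMap.ker (puncture K) = ⊥ := by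
    refine (Submodule.eq_bot_iff _).2 fun x hx => ?_
    obtain ⟨hxC, hx0⟩ := Submodule.mem_inf.1 hx
    by_contra hne
    have := hammingNorm_eq_hammingNorm_puncture_add K x
    rw [LinearMap.mem_ker.1 hx0, hammingNorm_zero] at this
    have := card_filter_le K (x · ≠ 0)
    have := hC x hxC hne
    omega
  have := finrank_map_add_finrank_inf_ker (puncture K) C
  rwa [hker, finrank_bot, add_zero] at this

end Puncture

def vanishingSetoid (C : Submodule F (ι → F)) : Setoid ι where
  r j j' := ∀ x ∈ C, x j = 0 ↔ x j' = 0
  iseqv := ⟨fun _ _ _ => Iff.rfl, fun h x hx => (h x hx).symm,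
    fun h h' x hx => (h x hx).trans (h' x hx)⟩

lemma finrank_le_card_quotient_vanishingSetoid [Finite ι] (C : Submodule F (ι → F)) :
    finrank F C ≤ Nat.card (Quotient (vanishingSetoid C)) := by
  have : Fintype ι := Fintype.ofFinite ι
  have : Fintype (Quotient (vanishingSetoid C)) := Fintype.ofFinite _
  let φ := (LinearMap.funLeft F F (Quotient.out : Quotient (vanishingSetoid C) → ι)).comp
    C.subtype
  have hφ : Function.Injective φ := by
    rw [← LinearMap.ker_eq_bot, Submodule.eq_bot_iff]
    intro x hx
    ext j
    exact ((Quotient.mk_out (s := vanishingSetoid C) j) x x.2).1 (congrFun hx ⟦j⟧)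
  simpa [Nat.card_eq_fintype_card] using LinearMap.finrank_le_finrank_of_injective hφ

lemma mul_card_quotient_le [Finite ι] (s : Setoid ι) {m : ℕ}
    (h : ∀ j, m ≤ Nat.card {j' // s j' j}) :
    m * Nat.card (Quotient s) ≤ Nat.card ι := by
  classical
  have : Fintype ι := Fintype.ofFinite ι
  have hle := Finset.mul_card_image_le_card (f := (Quotient.mk s)) univ m ?_
  · simpa [image_univ_of_surjective Quotient.mk_surjective, Nat.card_eq_fintype_card] using hle
  · simp only [mem_image, mem_univ, true_and, forall_exists_index, forall_apply_eq_imp_iff]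
    intro j
    simpa [Nat.card_eq_fintype_card, Fintype.card_subtype, Quotient.eq] using h j

lemma vanishingSetoid_of_imp {C : Submodule F (ι → F)} {j j' : ι} (hj' : ∃ c ∈ C, c j' ≠ 0)
    (h : ∀ x ∈ C, x j = 0 → x j' = 0) : vanishingSetoid C j j' := by
  refine fun x hx => ⟨h x hx, fun hxj' => ?_⟩
  by_contra hxj
  obtain ⟨c, hc, hcj'⟩ := hj'
  have := h (c - (c j / x j) • x) (C.sub_mem hc (C.smul_mem _ hx))
    (by simp [div_mul_cancel₀ _ hxj])
  exact hcj' (by simpa [hxj'] using this)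

lemma exists_card_vanishingSetoid_lt [Finite ι] {t : ℕ} (C : Fin t → Submodule F (ι → F))
    (hk : Nat.card ι < ∑ i, finrank F (C i)) :
    ∃ i j, Nat.card {j' // vanishingSetoid (C i) j' j} < t := by
  by_contra! h
  have hC : ∀ i, t * finrank F (C i) ≤ Nat.card ι := fun i =>
    (Nat.mul_le_mul_left t (finrank_le_card_quotient_vanishingSetoid (C i))).trans
      (mul_card_quotient_le _ (h i))
  have ht : 0 < t := by
    rcases Nat.eq_zero_or_pos t with rfl | ht
    · simp at hk
    · exact ht
  have : t * ∑ i, finrank F (C i) ≤ t * Nat.card ι := by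
    rw [Finset.mul_sum]
    simpa using Finset.sum_le_sum fun i (_ : i ∈ univ) => hC i
  have := Nat.le_of_mul_le_mul_left this ht
  omega

section Products

variable [Fintype ι] [DecidableEq F] {t : ℕ}

lemma hammingNorm_mul_le_left (x y : ι → F) : hammingNorm (x * y) ≤ hammingNorm x :=
  card_le_card fun j => by simpa using left_ne_zero_of_mul (a := x j) (b := y j)

def HasProdOfWeightLE (C : Fin t → Submodule F (ι → F)) (b : ℕ) : Prop :=
  ∃ c : Fin t → ι → F, (∀ i, c i ∈ C i) ∧ 1 ≤ hammingNorm (∏ i, c i) ∧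
    hammingNorm (∏ i, c i) ≤ b

variable {C : Fin t → Submodule F (ι → F)} {b : ℕ}

lemma HasProdOfWeightLE.mono {b' : ℕ} (h : HasProdOfWeightLE C b) (hb : b ≤ b') :
    HasProdOfWeightLE C b' :=
  let ⟨c, hc, h1, h2⟩ := h
  ⟨c, hc, h1, h2.trans hb⟩

lemma hasProdOfWeightLE_hammingNorm (hfs : ∀ i j, ∃ c ∈ C i, c j ≠ 0) {i₀ : Fin t}
    {w : ι → F} (hw : w ∈ C i₀) (hw0 : w ≠ 0) : HasProdOfWeightLE C (hammingNorm w) := by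
  classical
  obtain ⟨j, hj⟩ := Function.ne_iff.1 hw0
  rw [Pi.zero_apply] at hj
  choose g hg hgj using fun i => hfs i j
  refine ⟨Function.update g i₀ w, fun i => ?_, ?_, ?_⟩
  · rcases eq_or_ne i i₀ with rfl | hi <;> simp [*]
  · rw [Nat.one_le_iff_ne_zero, hammingNorm_ne_zero_iff, Function.ne_iff]
    refine ⟨j, ?_⟩
    simp only [Finset.prod_apply, Pi.zero_apply]
    exact Finset.prod_ne_zero_iff.2 fun i _ => by rcases eq_or_ne i i₀ with rfl | hi <;> simp [*]
  · rw [← Finset.mul_prod_erase _ _ (mem_univ i₀)]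
    simpa using hammingNorm_mul_le_left w _

section

variable [DecidableEq ι] {K : Finset ι}

lemma HasProdOfWeightLE.of_map_puncture
    (h : HasProdOfWeightLE (fun i => (C i).map (puncture K)) b) :
    HasProdOfWeightLE C (b + #K) := by
  obtain ⟨c, hc, h1, h2⟩ := h
  obtain ⟨x, hx, hxc⟩ := exists_prod_eq_of_mem_map_puncture K hc
  have hwt := hammingNorm_eq_hammingNorm_puncture_add K (∏ i, x i)
  have := card_filter_le K fun j => (∏ i, x i) j ≠ 0
  rw [hxc] at hwt
  exact ⟨x, hx, by omega, by omega⟩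

lemma HasProdOfWeightLE.of_map_puncture_of_forall_eq_zero {E : Fin t → Submodule F (ι → F)}
    (hEC : ∀ i, E i ≤ C i) {i₀ : Fin t} (hE : ∀ x ∈ E i₀, ∀ j ∈ K, x j = 0)
    (h : HasProdOfWeightLE (fun i => (E i).map (puncture K)) b) : HasProdOfWeightLE C b := by
  obtain ⟨c, hc, h1, h2⟩ := h
  obtain ⟨x, hx, hxc⟩ := exists_prod_eq_of_mem_map_puncture K hc
  have hwt := hammingNorm_eq_hammingNorm_puncture_add K (∏ i, x i)
  have hK : #{j ∈ K | (∏ i, x i) j ≠ 0} = 0 := by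
    refine card_eq_zero.2 (filter_eq_empty_iff.2 fun j hj => ?_)
    simpa [Finset.prod_apply] using Finset.prod_eq_zero (mem_univ i₀) (hE _ (hx i₀) j hj)
  rw [hxc, hK, add_zero] at hwt
  exact ⟨x, fun i => hEC i (hx i), hwt ▸ h1, hwt ▸ h2⟩

lemma hasProdOfWeightLE_add_card (hfs : ∀ i j, ∃ c ∈ C i, c j ≠ 0) (K : Finset ι)
    (hheavy : ∀ i, ∀ x ∈ C i, x ≠ 0 → #K < hammingNorm x)
    (hIH : ∀ D : Fin t → Submodule F ({j // j ∉ K} → F), (∀ i j, ∃ d ∈ D i, d j ≠ 0) →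
      ∑ i, finrank F (D i) = ∑ i, finrank F (C i) → HasProdOfWeightLE D b) :
    HasProdOfWeightLE C (b + #K) := by
  refine HasProdOfWeightLE.of_map_puncture (hIH _ (fun i j => ?_) ?_)
  · obtain ⟨c, hc, hcj⟩ := hfs i j
    exact ⟨puncture K c, Submodule.mem_map_of_mem hc, hcj⟩
  · simp only [finrank_map_puncture K (hheavy _)]

lemma hasProdOfWeightLE_of_puncture_class (hfs : ∀ i j, ∃ c ∈ C i, c j ≠ 0) {i₀ : Fin t}
    {j₀ : ι} (hK : ∀ j, j ∈ K ↔ vanishingSetoid (C i₀) j j₀)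
    (hheavy : ∀ i, ∀ x ∈ C i, x ≠ 0 → #K < hammingNorm x)
    (hIH : ∀ D : Fin t → Submodule F ({j // j ∉ K} → F), (∀ i j, ∃ d ∈ D i, d j ≠ 0) →
      ∑ i, finrank F (D i) + 1 = ∑ i, finrank F (C i) → HasProdOfWeightLE D b) :
    HasProdOfWeightLE C b := by
  set E := Function.update C i₀ (C i₀ ⊓ LinearMap.ker (LinearMap.proj j₀))
  have hEC : ∀ i, E i ≤ C i := by
    intro i
    rcases eq_or_ne i i₀ with rfl | hi <;> simp [E, *]
  have hE : ∀ x ∈ E i₀, ∀ j ∈ K, x j = 0 := by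
    intro x hx j hj
    simp only [E, Function.update_self, Submodule.mem_inf, LinearMap.mem_ker,
      LinearMap.proj_apply] at hx
    exact ((hK j).1 hj x hx.1).2 hx.2
  refine HasProdOfWeightLE.of_map_puncture_of_forall_eq_zero hEC hE (hIH _ (fun i j => ?_) ?_)
  · rcases eq_or_ne i i₀ with rfl | hi
    · obtain ⟨x, hx, hxj₀, hxj⟩ : ∃ x ∈ C i, x j₀ = 0 ∧ x j ≠ 0 := by
        by_contra! h
        exact j.2 ((hK j).2 ((vanishingSetoid _).symm' (vanishingSetoid_of_imp (hfs i j) h)))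
      exact ⟨puncture K x, Submodule.mem_map_of_mem (by simp [E, hx, hxj₀]), hxj⟩
    · obtain ⟨c, hc, hcj⟩ := hfs i j
      exact ⟨puncture K c, Submodule.mem_map_of_mem (by simpa [E, hi] using hc), hcj⟩
  · simp only [finrank_map_puncture K fun x hx => hheavy _ x (hEC _ hx)]
    have hfin : ∀ i, finrank F (E i) = Function.update (fun i => finrank F (C i)) i₀
        (finrank F ↥(C i₀ ⊓ LinearMap.ker (LinearMap.proj j₀))) i :=
      Function.apply_update (fun _ (D : Submodule F (ι → F)) => finrank F D) C i₀ _
    rw [Finset.sum_congr rfl fun i _ => hfin i, Finset.sum_update_of_mem (mem_univ i₀),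
      ← Finset.add_sum_erase _ _ (mem_univ i₀), ← finrank_inf_ker_proj_add_one (hfs i₀ j₀),
      sdiff_singleton_eq_erase]
    ring

end

end Products

lemma hasProdOfWeightLE_card [Fintype ι] [Nonempty ι] [DecidableEq F]
    (C : Fin 0 → Submodule F (ι → F)) : HasProdOfWeightLE C (Fintype.card ι) :=
  ⟨Fin.elim0, Fin.rec0, by simp [hammingNorm, Nat.one_le_iff_ne_zero], by simp [hammingNorm]⟩

lemma hasProdOfWeightLE_of_forall_puncture [Fintype ι] [DecidableEq ι] [Nonempty ι]
    [DecidableEq F] {t : ℕ} (ht : t ≠ 0) (C : Fin t → Submodule F (ι → F))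
    (hfs : ∀ i j, ∃ c ∈ C i, c j ≠ 0)
    (hIH : ∀ K : Finset ι, K.Nonempty → #K < Fintype.card ι →
      ∀ D : Fin t → Submodule F ({j // j ∉ K} → F), (∀ i j, ∃ d ∈ D i, d j ≠ 0) →
      HasProdOfWeightLE D (max (t - 1) (Fintype.card ι - #K + t - ∑ i, finrank F (D i)))) :
    HasProdOfWeightLE C (max (t - 1) (Fintype.card ι + t - ∑ i, finrank F (C i))) := by
  set m := Fintype.card ι
  set B := max (t - 1) (m + t - ∑ i, finrank F (C i))
  by_cases hlight : ∃ i, ∃ w ∈ C i, w ≠ 0 ∧ hammingNorm w ≤ B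
  · obtain ⟨i, w, hw, hw0, hwB⟩ := hlight
    exact (hasProdOfWeightLE_hammingNorm hfs hw hw0).mono hwB
  push Not at hlight
  obtain ⟨j₀⟩ := ‹Nonempty ι›
  have hBm : B < m := by
    obtain ⟨c, hc, hcj⟩ := hfs ⟨0, Nat.pos_of_ne_zero ht⟩ j₀
    have hc0 : c ≠ 0 := fun h => hcj (by simp [h])
    exact (hlight _ c hc hc0).trans_le hammingNorm_le_card_fintype
  rcases le_or_gt (∑ i, finrank F (C i)) m with hk | hk
  · have hheavy : ∀ i, ∀ x ∈ C i, x ≠ 0 → #{j₀} < hammingNorm x := fun i x hx hx0 => by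
      have := hlight i x hx hx0
      rw [card_singleton]
      omega
    refine (hasProdOfWeightLE_add_card (b := max (t - 1) (m - 1 + t - ∑ i, finrank F (C i)))
      hfs {j₀} hheavy fun D hD hDk => ?_).mono ?_
    · simpa [hDk] using hIH {j₀} (singleton_nonempty j₀) (by rw [card_singleton]; omega) D hD
    · rw [card_singleton]
      omega
  · classical
    obtain ⟨i₀, j₁, hsmall⟩ :=
      exists_card_vanishingSetoid_lt C (by rwa [Nat.card_eq_fintype_card])
    set K : Finset ι := {j | vanishingSetoid (C i₀) j j₁}
    have hK : ∀ j, j ∈ K ↔ vanishingSetoid (C i₀) j j₁ := by simp [K]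
    have hK₀ : K.Nonempty := ⟨j₁, (hK j₁).2 (Setoid.refl' _ j₁)⟩
    have hKt : #K < t := by
      rwa [Nat.card_eq_fintype_card, Fintype.card_subtype] at hsmall
    refine hasProdOfWeightLE_of_puncture_class hfs hK (fun i x hx hx0 => ?_) fun D hD hDk => ?_
    · have := hlight i x hx hx0
      omega
    · refine (hIH K hK₀ (by omega) D hD).mono ?_
      have := hK₀.card_pos
      omega

theorem hasProdOfWeightLE_of_fullSupport [Fintype ι] [Nonempty ι] [DecidableEq F] {t : ℕ}
    (C : Fin t → Submodule F (ι → F)) (hfs : ∀ i j, ∃ c ∈ C i, c j ≠ 0) :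
    HasProdOfWeightLE C (max (t - 1) (Fintype.card ι + t - ∑ i, finrank F (C i))) := by
  rcases eq_or_ne t 0 with rfl | ht
  · simpa using hasProdOfWeightLE_card C
  induction hm : Fintype.card ι using Nat.strong_induction_on generalizing ι with
  | _ m IH =>
  classical
  refine hm ▸ hasProdOfWeightLE_of_forall_puncture ht C hfs fun K hK₀ hK D hD => ?_
  have hcard : Fintype.card {j // j ∉ K} = Fintype.card ι - #K := by
    simp [Fintype.card_subtype_compl]
  have : Nonempty {j // j ∉ K} := Fintype.card_pos_iff.1 (by omega)
  exact IH _ (by have := hK₀.card_pos; omega) D hD hcard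

end ProductCode

theorem stmt4_general {F : Type*} [Field F] [DecidableEq F] {n t : ℕ}
    (C : Fin t → Submodule F (Fin n → F))
    (hfs : ∀ i, fullSupport F (C i))
    (hne : prodFamily F C ≠ ⊥) :
    ∃ c : Fin t → (Fin n → F), (∀ i, c i ∈ C i) ∧
      1 ≤ hammingNorm (∏ i, c i) ∧
      hammingNorm (∏ i, c i) ≤ max (t - 1) (n + t - ∑ i, Module.finrank F (C i)) := by
  have : Nonempty (Fin n) := by
    rcases n with _ | n
    · exact absurd Submodule.eq_bot_of_subsingleton hne
    · exact ⟨0⟩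
  obtain ⟨c, hc, h1, h2⟩ := ProductCode.hasProdOfWeightLE_of_fullSupport C hfs
  exact ⟨c, hc, h1, by rwa [Fintype.card_fin] at h2⟩

theorem stmt4 {F : Type*} [Field F] [Fintype F] [DecidableEq F] {n t : ℕ}
    (ht : 1 ≤ t) (C : Fin t → Submodule F (Fin n → F))
    (hfs : ∀ i, fullSupport F (C i))
    (hne : prodFamily F C ≠ ⊥) :
    ∃ c : Fin t → (Fin n → F), (∀ i, c i ∈ C i) ∧
      1 ≤ hammingNorm (∏ i, c i) ∧
      hammingNorm (∏ i, c i) ≤ max (t - 1) (n + t - ∑ i, Module.finrank F (C i)) :=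
  stmt4_general C hfs hne
end
end

section
/- Let t ≥ 1 and let C_1, ..., C_t ⊆ F_q^n be linear codes of dimensions k_1, ..., k_t with nonzero product C_1*...*C_t; if t ≥ 3, assume the support condition holds (every coordinate is either in the support of all C_i or in the support of at most one of them). Then dmin(C_1*...*C_t) ≤ max(t - 1, n + t - (k_1 + ... + k_t)). -/
noncomputable section

/-!
Coordinates outside the common support `J` of the codes each lie in the support of at most one
`C i`, so puncturing every code to `J` costs at most `n - #J` dimensions in total. This reduces
the bound to codes that all have the same support `S`, where we induct on `#S`.

If `∑ k_i ≤ t`, any nonzero product will do. Otherwise pick `C i` with `k_i ≥ 2` and a coordinate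
`j` with parallel class `R` in `C i`. Shortening `C i` at `j` makes it vanish on all of `R` at the
cost of one dimension, and puncturing the other codes at `R` costs them
`∑_{m ≠ i} dim (C m ∩ F^R)` dimensions; when this is `< #R`, the bound for the support `S \ R`
gives the bound for `S`. When no choice of `(i, j)` allows this, take `R` of minimal size:
minimality forces `dim (C m ∩ F^R) ≤ 1` for every `m`, hence `#R ≤ t - 1`, and a nonzero codeword
of some `C m` supported on `R`, multiplied by codewords of the other codes that are nonzero at one
of its coordinates, is a nonzero product of weight at most `t - 1`.
-/

namespace ProductCode

open Finset Module Submodule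

theorem finrank_map_add_finrank_inf_ker_s5 {K V W : Type*} [DivisionRing K] [AddCommGroup V]
    [Module K V] [AddCommGroup W] [Module K W] [FiniteDimensional K V] (f : V →ₗ[K] W)
    (p : Submodule K V) :
    finrank K (p.map f) + finrank K ↥(p ⊓ LinearMap.ker f) = finrank K p := by
  rw [← (f.domRestrict p).finrank_range_add_finrank_ker, LinearMap.range_domRestrict,
    LinearMap.ker_domRestrict, ← finrank_map_subtype_eq, map_comap_subtype]

variable {F : Type*} [Field F] {n t : ℕ}

def supported (F : Type*) [Field F] (T : Finset (Fin n)) : Submodule F (Fin n → F) where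
  carrier := {x | ∀ y ∉ T, x y = 0}
  zero_mem' _ _ := rfl
  add_mem' hx hx' y hy := by simp [hx y hy, hx' y hy]
  smul_mem' a x hx y hy := by simp [hx y hy]

theorem mem_supported {T : Finset (Fin n)} {x : Fin n → F} :
    x ∈ supported F T ↔ ∀ y ∉ T, x y = 0 :=
  Iff.rfl

theorem finrank_le_card_of_le_supported {T : Finset (Fin n)} {V : Submodule F (Fin n → F)}
    (hV : V ≤ supported F T) : finrank F V ≤ #T := by
  let restrict : V →ₗ[F] (T → F) := LinearMap.funLeft F F ((↑) : T → Fin n) ∘ₗ V.subtype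
  have hinj : Function.Injective restrict := by
    refine (injective_iff_map_eq_zero restrict).2 fun v hv => Subtype.ext <| funext fun y => ?_
    by_cases hy : y ∈ T
    · exact congrFun hv ⟨y, hy⟩
    · exact hV v.2 y hy
  simpa using LinearMap.finrank_le_finrank_of_injective hinj

theorem hammingNorm_le_card_of_mem_supported [DecidableEq F] {T : Finset (Fin n)}
    {x : Fin n → F} (hx : x ∈ supported F T) : hammingNorm x ≤ #T :=
  card_le_card fun y hy => by_contra fun hyT => (mem_filter.1 hy).2 (hx y hyT)

theorem hammingNorm_le_of_forall_ne_zero [DecidableEq F] {x x' : Fin n → F}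
    (h : ∀ y, x y ≠ 0 → x' y ≠ 0) : hammingNorm x ≤ hammingNorm x' :=
  card_le_card fun y hy => mem_filter.2 ⟨mem_univ y, h y (mem_filter.1 hy).2⟩

def zeroOn (T : Finset (Fin n)) : (Fin n → F) →ₗ[F] (Fin n → F) :=
  LinearMap.pi fun y => if y ∈ T then 0 else LinearMap.proj y

theorem zeroOn_apply (T : Finset (Fin n)) (x : Fin n → F) (y : Fin n) :
    zeroOn T x y = if y ∈ T then 0 else x y := by
  by_cases hy : y ∈ T <;> simp [zeroOn, hy]

theorem ker_zeroOn (T : Finset (Fin n)) : LinearMap.ker (zeroOn (F := F) T) = supported F T := by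
  ext x
  simp only [LinearMap.mem_ker, mem_supported, funext_iff, zeroOn_apply, Pi.zero_apply]
  exact forall_congr' fun y => by by_cases hy : y ∈ T <;> simp [hy]

open Classical in
def codeSupport (C : Submodule F (Fin n → F)) : Finset (Fin n) :=
  univ.filter fun j => ∃ c ∈ C, c j ≠ 0

theorem mem_codeSupport {C : Submodule F (Fin n → F)} {j : Fin n} :
    j ∈ codeSupport C ↔ ∃ c ∈ C, c j ≠ 0 := by
  simp [codeSupport]

theorem le_supported_codeSupport (C : Submodule F (Fin n → F)) :
    C ≤ supported F (codeSupport C) :=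
  fun c hc _ hy => by_contra fun hcy => hy (mem_codeSupport.2 ⟨c, hc, hcy⟩)

theorem inf_supported_eq_bot {C : Submodule F (Fin n → F)} {T : Finset (Fin n)}
    (h : Disjoint (codeSupport C) T) : C ⊓ supported F T = ⊥ := by
  refine eq_bot_iff.2 fun c hc => (mem_bot F).2 <| funext fun y => ?_
  by_cases hy : y ∈ T
  · exact le_supported_codeSupport C (Submodule.mem_inf.1 hc).1 y (disjoint_right.1 h hy)
  · exact (Submodule.mem_inf.1 hc).2 y hy

theorem codeSupport_map_zeroOn (C : Submodule F (Fin n → F)) (T : Finset (Fin n)) :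
    codeSupport (C.map (zeroOn T)) = codeSupport C \ T := by
  ext y
  by_cases hy : y ∈ T <;> simp [mem_codeSupport, zeroOn_apply, hy]

theorem finrank_le_finrank_inf_ker_proj_add_one (C : Submodule F (Fin n → F)) (j : Fin n) :
    finrank F C ≤ finrank F ↥(C ⊓ LinearMap.ker (LinearMap.proj j)) + 1 := by
  set π : (Fin n → F) →ₗ[F] F := LinearMap.proj j
  have hmap : finrank F (C.map π) ≤ 1 := (Submodule.finrank_le _).trans (finrank_self F).le
  have := finrank_map_add_finrank_inf_ker_s5 π C
  omega

open Classical in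
/-- The parallel class of `j`: the coordinates `y` whose column in a generator matrix of `C` is
a nonzero multiple of column `j`. -/
def parallelClass (C : Submodule F (Fin n → F)) (j : Fin n) : Finset (Fin n) :=
  (codeSupport C).filter fun y => ∀ c ∈ C, c j = 0 → c y = 0

theorem mem_parallelClass {C : Submodule F (Fin n → F)} {j y : Fin n} :
    y ∈ parallelClass C j ↔ y ∈ codeSupport C ∧ ∀ c ∈ C, c j = 0 → c y = 0 := by
  classical
  simp [parallelClass]

theorem parallelClass_subset_codeSupport (C : Submodule F (Fin n → F)) (j : Fin n) :
    parallelClass C j ⊆ codeSupport C :=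
  fun _ hy => (mem_parallelClass.1 hy).1

theorem self_mem_parallelClass {C : Submodule F (Fin n → F)} {j : Fin n}
    (hj : j ∈ codeSupport C) : j ∈ parallelClass C j :=
  mem_parallelClass.2 ⟨hj, fun _ _ h => h⟩

theorem codeSupport_inf_ker_proj (C : Submodule F (Fin n → F)) (j : Fin n) :
    codeSupport (C ⊓ LinearMap.ker (LinearMap.proj j)) = codeSupport C \ parallelClass C j := by
  ext y
  simp only [mem_codeSupport, mem_sdiff, mem_parallelClass, Submodule.mem_inf, LinearMap.mem_ker,
    LinearMap.proj_apply]
  constructor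
  · rintro ⟨c, ⟨hc, hcj⟩, hcy⟩
    exact ⟨⟨c, hc, hcy⟩, fun h => hcy (h.2 c hc hcj)⟩
  · rintro ⟨hy, hnot⟩
    obtain ⟨c, hc, hcj, hcy⟩ : ∃ c ∈ C, c j = 0 ∧ c y ≠ 0 := by
      by_contra! h
      exact hnot ⟨hy, h⟩
    exact ⟨c, ⟨hc, hcj⟩, hcy⟩

theorem parallelClass_subset_of_mem_supported {C : Submodule F (Fin n → F)} {T : Finset (Fin n)}
    {v : Fin n → F} (hv : v ∈ C) (hvT : v ∈ supported F T) {y : Fin n} (hy : v y ≠ 0) :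
    parallelClass C y ⊆ T := by
  intro y' hy'
  by_contra hy'T
  obtain ⟨hy'C, hclass⟩ := mem_parallelClass.1 hy'
  obtain ⟨w, hw, hwy'⟩ := mem_codeSupport.1 hy'C
  -- `w - (w y / v y) • v` vanishes at `y` but not at `y'`
  have := hclass _ (C.sub_mem hw (C.smul_mem (w y / v y) hv)) (by simp [div_mul_cancel₀ _ hy])
  simp [hvT y' hy'T, hwy'] at this

theorem finrank_inf_supported_le_one_of_subset_parallelClass {C : Submodule F (Fin n → F)}
    {T : Finset (Fin n)} {y : Fin n} (hT : T ⊆ parallelClass C y) :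
    finrank F ↥(C ⊓ supported F T) ≤ 1 := by
  let ev : ↥(C ⊓ supported F T) →ₗ[F] F := LinearMap.proj y ∘ₗ (C ⊓ supported F T).subtype
  have hinj : Function.Injective ev := by
    refine (injective_iff_map_eq_zero ev).2 fun c hc => Subtype.ext <| funext fun y' => ?_
    obtain ⟨hcC, hcT⟩ := Submodule.mem_inf.1 c.2
    by_cases hy' : y' ∈ T
    · exact (mem_parallelClass.1 (hT hy')).2 c hcC hc
    · exact hcT y' hy'
  simpa using LinearMap.finrank_le_finrank_of_injective hinj

theorem prod_mem_prodFamily {C : Fin t → Submodule F (Fin n → F)} {c : Fin t → Fin n → F}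
    (hc : ∀ i, c i ∈ C i) : ∏ i, c i ∈ prodFamily F C :=
  subset_span ⟨c, hc, rfl⟩

theorem prodFamily_mono {C D : Fin t → Submodule F (Fin n → F)} (h : ∀ i, C i ≤ D i) :
    prodFamily F C ≤ prodFamily F D :=
  span_mono fun _ ⟨c, hc, hz⟩ => ⟨c, fun i => h i (hc i), hz⟩

theorem prodFamily_map_zeroOn_le {C : Fin t → Submodule F (Fin n → F)} {T : Finset (Fin n)}
    (hT : ∀ y ∈ T, ∃ i, y ∉ codeSupport (C i)) :
    prodFamily F (fun i => (C i).map (zeroOn T)) ≤ prodFamily F C := by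
  refine span_le.2 ?_
  rintro _ ⟨d, hd, rfl⟩
  choose c hc hcd using fun i => mem_map.1 (hd i)
  suffices ∏ i, d i = ∏ i, c i from this ▸ prod_mem_prodFamily hc
  funext y
  simp only [prod_apply]
  by_cases hy : y ∈ T
  · obtain ⟨i, hi⟩ := hT y hy
    rw [prod_eq_zero (mem_univ i) (by rw [← hcd i, zeroOn_apply, if_pos hy]),
      prod_eq_zero (mem_univ i) (le_supported_codeSupport _ (hc i) y hi)]
  · exact prod_congr rfl fun i _ => by rw [← hcd i, zeroOn_apply, if_neg hy]

theorem exists_mem_prodFamily_ne_zero_hammingNorm_le [DecidableEq F]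
    {C : Fin t → Submodule F (Fin n → F)} {i₀ : Fin t} {v : Fin n → F} (hv : v ∈ C i₀)
    {y : Fin n} (hvy : v y ≠ 0) (hy : ∀ i, y ∈ codeSupport (C i)) :
    ∃ z ∈ prodFamily F C, z ≠ 0 ∧ hammingNorm z ≤ hammingNorm v := by
  choose c hc hcy using fun i => mem_codeSupport.1 (hy i)
  set c' := Function.update c i₀ v
  have hc' : ∀ i, c' i ∈ C i := by
    intro i
    by_cases h : i = i₀
    · subst h; simpa [c'] using hv
    · simpa [c', h] using hc i
  refine ⟨∏ i, c' i, prod_mem_prodFamily hc', Function.ne_iff.2 ⟨y, ?_⟩,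
    hammingNorm_le_of_forall_ne_zero fun x hx => ?_⟩
  · rw [prod_apply, Pi.zero_apply, prod_ne_zero_iff]
    intro i _
    by_cases h : i = i₀
    · subst h; simpa [c'] using hvy
    · simpa [c', h] using hcy i
  · rw [prod_apply, prod_ne_zero_iff] at hx
    simpa [c'] using hx i₀ (mem_univ _)

open Classical in
def commonSupport (C : Fin t → Submodule F (Fin n → F)) : Finset (Fin n) :=
  univ.filter fun j => ∀ i, j ∈ codeSupport (C i)

theorem mem_commonSupport {C : Fin t → Submodule F (Fin n → F)} {j : Fin n} :
    j ∈ commonSupport C ↔ ∀ i, j ∈ codeSupport (C i) := by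
  classical
  simp [commonSupport]

theorem prodFamily_le_supported_commonSupport (C : Fin t → Submodule F (Fin n → F)) :
    prodFamily F C ≤ supported F (commonSupport C) := by
  refine span_le.2 ?_
  rintro _ ⟨c, hc, rfl⟩ y hy
  obtain ⟨i, hi⟩ : ∃ i, y ∉ codeSupport (C i) := by simpa [mem_commonSupport] using hy
  rw [prod_apply]
  exact prod_eq_zero (mem_univ i) (le_supported_codeSupport _ (hc i) y hi)

theorem codeSupport_nonempty {C : Submodule F (Fin n → F)} (hC : C ≠ ⊥) :
    (codeSupport C).Nonempty := by
  obtain ⟨v, hv, hv0⟩ := (Submodule.ne_bot_iff _).1 hC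
  obtain ⟨y, hy⟩ := Function.ne_iff.1 hv0
  exact ⟨y, mem_codeSupport.2 ⟨v, hv, hy⟩⟩

theorem exists_shortening {S : Finset (Fin n)} {C : Fin t → Submodule F (Fin n → F)}
    (hC : ∀ m, codeSupport (C m) = S) {i : Fin t} (hi : 2 ≤ finrank F (C i)) {j : Fin n}
    (hlt : ∑ m ∈ univ.erase i, finrank F ↥(C m ⊓ supported F (parallelClass (C i) j)) <
      #(parallelClass (C i) j)) :
    ∃ S' ⊂ S, S'.Nonempty ∧ ∃ D : Fin t → Submodule F (Fin n → F),
      (∀ m, codeSupport (D m) = S') ∧ prodFamily F D ≤ prodFamily F C ∧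
      ∑ m, finrank F (C m) + #S' ≤ ∑ m, finrank F (D m) + #S := by
  set R := parallelClass (C i) j
  have hRS : R ⊆ S := hC i ▸ parallelClass_subset_codeSupport _ _
  set E := Function.update C i (C i ⊓ LinearMap.ker (LinearMap.proj j))
  have hEi' : E i = C i ⊓ LinearMap.ker (LinearMap.proj j) := Function.update_self _ _ _
  have hEi : codeSupport (E i) = S \ R := by
    rw [hEi', codeSupport_inf_ker_proj, hC i]
  have hEm : ∀ m ∈ univ.erase i, E m = C m := fun m hm =>
    Function.update_of_ne (ne_of_mem_erase hm) _ _
  have hEC : ∀ m, E m ≤ C m := by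
    intro m
    by_cases h : m = i
    · exact h ▸ hEi' ▸ inf_le_left
    · exact (hEm m (mem_erase.2 ⟨h, mem_univ m⟩)).le
  have hrank : ∀ m, finrank F ((E m).map (zeroOn R)) + finrank F ↥(E m ⊓ supported F R) =
      finrank F (E m) := fun m => by
    rw [← ker_zeroOn]
    exact finrank_map_add_finrank_inf_ker_s5 _ _
  have hEi_bot : E i ⊓ supported F R = ⊥ := inf_supported_eq_bot (hEi ▸ sdiff_disjoint)
  have hki : finrank F (C i) ≤ finrank F (E i) + 1 :=
    hEi' ▸ finrank_le_finrank_inf_ker_proj_add_one (C i) j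
  have hRne : R.Nonempty := card_pos.1 (by omega)
  have hS'ne : (S \ R).Nonempty := hEi ▸ codeSupport_nonempty fun h => by
    rw [h, finrank_bot] at hki
    omega
  refine ⟨S \ R, sdiff_ssubset hRS hRne, hS'ne, fun m => (E m).map (zeroOn R), fun m => ?_,
    (prodFamily_map_zeroOn_le fun y hy => ⟨i, by simp [hEi, hy]⟩).trans (prodFamily_mono hEC), ?_⟩
  · rw [codeSupport_map_zeroOn]
    by_cases h : m = i
    · rw [h, hEi, Finset.sdiff_idem]
    · rw [hEm m (mem_erase.2 ⟨h, mem_univ m⟩), hC m]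
  · have hrest : ∑ m ∈ univ.erase i, finrank F (C m) =
        ∑ m ∈ univ.erase i, finrank F ((E m).map (zeroOn R)) +
          ∑ m ∈ univ.erase i, finrank F ↥(C m ⊓ supported F R) := by
      rw [← sum_add_distrib]
      exact sum_congr rfl fun m hm => by rw [← hEm m hm, hrank m]
    have hDi := hrank i
    rw [hEi_bot, finrank_bot] at hDi
    have hcard := card_sdiff_add_card_eq_card hRS
    rw [← add_sum_erase _ _ (mem_univ i), ← add_sum_erase _ _ (mem_univ i)]
    beta_reduce
    omega

theorem finrank_inf_supported_le_one_of_minimal {C : Submodule F (Fin n → F)} {R : Finset (Fin n)}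
    (hmin : 2 ≤ finrank F C → ∀ y ∈ codeSupport C, #R ≤ #(parallelClass C y)) :
    finrank F ↥(C ⊓ supported F R) ≤ 1 := by
  by_cases hk : finrank F C ≤ 1
  · exact (Submodule.finrank_mono inf_le_left).trans hk
  by_cases hbot : C ⊓ supported F R = ⊥
  · rw [hbot, finrank_bot]
    exact zero_le_one
  obtain ⟨v, hv, hv0⟩ := (Submodule.ne_bot_iff _).1 hbot
  obtain ⟨y, hy⟩ := Function.ne_iff.1 hv0
  obtain ⟨hvC, hvR⟩ := Submodule.mem_inf.1 hv
  have hsub := parallelClass_subset_of_mem_supported hvC hvR hy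
  have hclass := eq_of_subset_of_card_le hsub (hmin (by omega) y (mem_codeSupport.2 ⟨v, hvC, hy⟩))
  exact finrank_inf_supported_le_one_of_subset_parallelClass hclass.ge

theorem exists_mem_prodFamily_hammingNorm_le_sub_one [DecidableEq F]
    {S : Finset (Fin n)} {C : Fin t → Submodule F (Fin n → F)} (hC : ∀ m, codeSupport (C m) = S)
    (hS : S.Nonempty) {i : Fin t} (hi : 2 ≤ finrank F (C i))
    (hclass : ∀ i, 2 ≤ finrank F (C i) → ∀ j, #(parallelClass (C i) j) ≤
      ∑ m ∈ univ.erase i, finrank F ↥(C m ⊓ supported F (parallelClass (C i) j))) :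
    ∃ z ∈ prodFamily F C, z ≠ 0 ∧ hammingNorm z ≤ t - 1 := by
  obtain ⟨j, hj⟩ := hS
  obtain ⟨⟨i₀, j₀⟩, hp, hmin⟩ :=
    exists_min_image ((univ.filter fun m => 2 ≤ finrank F (C m)) ×ˢ S)
      (fun p => #(parallelClass (C p.1) p.2)) ⟨(i, j), by simp [hi, hj]⟩
  simp only [mem_product, mem_filter, mem_univ, true_and] at hp
  set R := parallelClass (C i₀) j₀
  have hle : ∀ m, finrank F ↥(C m ⊓ supported F R) ≤ 1 := fun m =>
    finrank_inf_supported_le_one_of_minimal fun hm y hy => hmin (m, y) (by simp [hm, ← hC m, hy])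
  have hRpos : 0 < #R := card_pos.2 ⟨j₀, self_mem_parallelClass (hC i₀ ▸ hp.2)⟩
  have hsum : #R ≤ ∑ m ∈ univ.erase i₀, finrank F ↥(C m ⊓ supported F R) := hclass i₀ hp.1 j₀
  have hRt : #R ≤ t - 1 :=
    calc #R ≤ _ := hsum
      _ ≤ #(univ.erase i₀) • 1 := sum_le_card_nsmul _ _ _ fun m _ => hle m
      _ = t - 1 := by simp
  obtain ⟨m, -, hm⟩ : ∃ m ∈ univ.erase i₀, C m ⊓ supported F R ≠ ⊥ := by
    by_contra! h
    rw [sum_eq_zero fun m hm => by rw [h m hm, finrank_bot]] at hsum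
    omega
  obtain ⟨v, hv, hv0⟩ := (Submodule.ne_bot_iff _).1 hm
  obtain ⟨y, hy⟩ := Function.ne_iff.1 hv0
  obtain ⟨hvC, hvR⟩ := Submodule.mem_inf.1 hv
  have hyS : y ∈ S := hC m ▸ mem_codeSupport.2 ⟨v, hvC, hy⟩
  obtain ⟨z, hz, hz0, hzv⟩ :=
    exists_mem_prodFamily_ne_zero_hammingNorm_le hvC hy fun m' => (hC m').symm ▸ hyS
  exact ⟨z, hz, hz0, hzv.trans ((hammingNorm_le_card_of_mem_supported hvR).trans hRt)⟩

theorem exists_mem_prodFamily_hammingNorm_le_of_codeSupport_eq [DecidableEq F] (ht : 1 ≤ t)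
    {S : Finset (Fin n)} (hS : S.Nonempty) {C : Fin t → Submodule F (Fin n → F)}
    (hC : ∀ i, codeSupport (C i) = S) :
    ∃ z ∈ prodFamily F C, z ≠ 0 ∧
      hammingNorm z ≤ max (t - 1) (#S + t - ∑ i, finrank F (C i)) := by
  induction S using Finset.strongInduction generalizing C with
  | H S ih =>
  by_cases hk : ∑ i, finrank F (C i) ≤ t
  · obtain ⟨j, hj⟩ := hS
    obtain ⟨v, hv, hvj⟩ := mem_codeSupport.1 ((hC ⟨0, ht⟩).symm ▸ hj)
    obtain ⟨z, hz, hz0, hzv⟩ :=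
      exists_mem_prodFamily_ne_zero_hammingNorm_le hv hvj fun i => (hC i).symm ▸ hj
    have hvS : hammingNorm v ≤ #S :=
      hammingNorm_le_card_of_mem_supported (hC ⟨0, ht⟩ ▸ le_supported_codeSupport _ hv)
    exact ⟨z, hz, hz0, le_max_of_le_right (by omega)⟩
  obtain ⟨i, hi⟩ : ∃ i, 2 ≤ finrank F (C i) := by
    by_contra! h
    exact hk ((sum_le_card_nsmul _ _ 1 fun i _ => Nat.le_of_lt_succ (h i)).trans (by simp))
  by_cases hclass : ∀ i, 2 ≤ finrank F (C i) → ∀ j, #(parallelClass (C i) j) ≤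
      ∑ m ∈ univ.erase i, finrank F ↥(C m ⊓ supported F (parallelClass (C i) j))
  · obtain ⟨z, hz, hz0, hwt⟩ :=
      exists_mem_prodFamily_hammingNorm_le_sub_one hC hS hi hclass
    exact ⟨z, hz, hz0, le_max_of_le_left hwt⟩
  simp only [not_forall, not_le] at hclass
  obtain ⟨i, hi, j, hlt⟩ := hclass
  obtain ⟨S', hS'S, hS', D, hD, hDC, hdim⟩ := exists_shortening hC hi hlt
  obtain ⟨z, hz, hz0, hwt⟩ := ih S' hS'S hS' hD
  exact ⟨z, hDC hz, hz0, hwt.trans (max_le_max le_rfl (by omega))⟩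

def SupportCondition (C : Fin t → Submodule F (Fin n → F)) : Prop :=
  ∀ j, (∀ i, j ∈ codeSupport (C i)) ∨
    ∀ i i', j ∈ codeSupport (C i) → j ∈ codeSupport (C i') → i = i'

theorem sum_finrank_inf_supported_compl_commonSupport_le {C : Fin t → Submodule F (Fin n → F)}
    (hsc : SupportCondition C) :
    ∑ i, finrank F ↥(C i ⊓ supported F (commonSupport C)ᶜ) ≤ #(commonSupport C)ᶜ := by
  set J := commonSupport C
  have hdisj : Set.PairwiseDisjoint ↑(univ : Finset (Fin t)) fun i => codeSupport (C i) \ J := by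
    intro i _ i' _ hii'
    refine disjoint_left.2 fun y hy hy' => ?_
    rw [mem_sdiff] at hy hy'
    rcases hsc y with hall | hone
    · exact hy.2 (mem_commonSupport.2 hall)
    · exact hii' (hone i i' hy.1 hy'.1)
  calc ∑ i, finrank F ↥(C i ⊓ supported F Jᶜ) ≤ ∑ i, #(codeSupport (C i) \ J) :=
        sum_le_sum fun i _ => finrank_le_card_of_le_supported fun v hv y hy => by
          by_cases hyJ : y ∈ J
          · exact (Submodule.mem_inf.1 hv).2 y (notMem_compl.2 hyJ)
          · exact le_supported_codeSupport _ (Submodule.mem_inf.1 hv).1 y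
              fun hyC => hy (mem_sdiff.2 ⟨hyC, hyJ⟩)
    _ = #(univ.biUnion fun i => codeSupport (C i) \ J) := (card_biUnion hdisj).symm
    _ ≤ #Jᶜ := card_le_card <| biUnion_subset.2 fun i _ y hy => mem_compl.2 (mem_sdiff.1 hy).2

theorem exists_mem_prodFamily_hammingNorm_le [DecidableEq F] (ht : 1 ≤ t)
    {C : Fin t → Submodule F (Fin n → F)} (hne : prodFamily F C ≠ ⊥)
    (hsc : SupportCondition C) :
    ∃ z ∈ prodFamily F C, z ≠ 0 ∧
      hammingNorm z ≤ max (t - 1) (n + t - ∑ i, finrank F (C i)) := by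
  set J := commonSupport C
  have hJ : J.Nonempty := by
    obtain ⟨z, hz, hz0⟩ := (Submodule.ne_bot_iff _).1 hne
    obtain ⟨y, hy⟩ := Function.ne_iff.1 hz0
    exact ⟨y, by_contra fun hyJ => hy (prodFamily_le_supported_commonSupport C hz y hyJ)⟩
  have hD : ∀ i, codeSupport ((C i).map (zeroOn Jᶜ)) = J := fun i => by
    rw [codeSupport_map_zeroOn, sdiff_compl, inf_eq_right.2 fun y hy => mem_commonSupport.1 hy i]
  obtain ⟨z, hz, hz0, hwt⟩ := exists_mem_prodFamily_hammingNorm_le_of_codeSupport_eq ht hJ hD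
  have hrank : ∑ i, finrank F ((C i).map (zeroOn Jᶜ)) +
      ∑ i, finrank F ↥(C i ⊓ supported F Jᶜ) = ∑ i, finrank F (C i) := by
    rw [← sum_add_distrib]
    refine sum_congr rfl fun i _ => ?_
    rw [← ker_zeroOn]
    exact finrank_map_add_finrank_inf_ker_s5 _ _
  have hlost : ∑ i, finrank F ↥(C i ⊓ supported F Jᶜ) ≤ #Jᶜ :=
    sum_finrank_inf_supported_compl_commonSupport_le hsc
  have hn : #J + #Jᶜ = n := by rw [card_add_card_compl, Fintype.card_fin]
  refine ⟨z, prodFamily_map_zeroOn_le (fun y hy => ?_) hz, hz0,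
    hwt.trans (max_le_max le_rfl (by omega))⟩
  simpa [J, mem_commonSupport] using hy

theorem forall_or_eq_of_le_two {t : ℕ} (ht : t ≤ 2) (p : Fin t → Prop) :
    (∀ i, p i) ∨ ∀ i i', p i → p i' → i = i' := by
  by_contra! h
  obtain ⟨⟨i₀, hi₀⟩, i, i', hi, hi', hii'⟩ := h
  have : i₀ = i ∨ i₀ = i' := by omega
  rcases this with rfl | rfl <;> contradiction

end ProductCode

theorem stmt5_general {F : Type*} [Field F] [DecidableEq F] {n t : ℕ}
    (ht : 1 ≤ t) (C : Fin t → Submodule F (Fin n → F))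
    (hne : prodFamily F C ≠ ⊥)
    (hsc : 3 ≤ t → ∀ j : Fin n,
      (∀ i, ∃ c ∈ C i, c j ≠ 0) ∨
      (∀ i i', (∃ c ∈ C i, c j ≠ 0) → (∃ c ∈ C i', c j ≠ 0) → i = i')) :
    dmin (prodFamily F C) ≤ max (t - 1) (n + t - ∑ i, Module.finrank F (C i)) := by
  have hsc' : ProductCode.SupportCondition C := by
    simp only [ProductCode.SupportCondition, ProductCode.mem_codeSupport]
    rcases le_or_gt 3 t with h3 | h2
    · exact hsc h3
    · exact fun j => ProductCode.forall_or_eq_of_le_two (by omega) _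
  obtain ⟨z, hz, hz0, hwt⟩ := ProductCode.exists_mem_prodFamily_hammingNorm_le ht hne hsc'
  calc dmin (prodFamily F C) ≤ hammingNorm z := Nat.sInf_le ⟨z, hz, hz0, rfl⟩
    _ ≤ _ := hwt

theorem stmt5 {F : Type*} [Field F] [Fintype F] [DecidableEq F] {n t : ℕ}
    (ht : 1 ≤ t) (C : Fin t → Submodule F (Fin n → F))
    (hne : prodFamily F C ≠ ⊥)
    (hsc : 3 ≤ t → ∀ j : Fin n,
      (∀ i, ∃ c ∈ C i, c j ≠ 0) ∨
      (∀ i i', (∃ c ∈ C i, c j ≠ 0) → (∃ c ∈ C i', c j ≠ 0) → i = i')) :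
    dmin (prodFamily F C) ≤ max (t - 1) (n + t - ∑ i, Module.finrank F (C i)) :=
  stmt5_general ht C hne hsc

end
end

section
/- Let C ⊆ F_q^n be a linear code of dimension k such that the square code C^(2) = C*C is nonzero. Then dmin(C*C) ≤ max(1, n - 2k + 2). -/
open Module LinearMap Function
set_option linter.unusedSectionVars false
set_option maxHeartbeats 1000000


noncomputable section

section Aux
variable {F : Type*} [Field F] [DecidableEq F] {n : ℕ}

lemma rank_nullity_sub {V W : Type*} [AddCommGroup V] [Module F V] [AddCommGroup W] [Module F W]
    [FiniteDimensional F V] (f : V →ₗ[F] W) (p : Submodule F V) :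
    finrank F p = finrank F (p.map f) + finrank F (p ⊓ LinearMap.ker f : Submodule F V) := by
  have h := LinearMap.finrank_range_add_finrank_ker (f.comp p.subtype)
  have hr : LinearMap.range (f.comp p.subtype) = p.map f := by
    rw [LinearMap.range_comp, Submodule.range_subtype]
  have hk : finrank F (LinearMap.ker (f.comp p.subtype)) =
      finrank F (p ⊓ LinearMap.ker f : Submodule F V) := by
    rw [LinearMap.ker_comp]
    have := (Submodule.equivMapOfInjective p.subtype p.injective_subtype
      (Submodule.comap p.subtype (LinearMap.ker f))).finrank_eq
    rw [this, Submodule.map_comap_subtype]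
  rw [hr, hk] at h
  omega

lemma finrank_le_card_support (M : Submodule F (Fin n → F)) (T : Finset (Fin n))
    (h : ∀ x ∈ M, ∀ j ∉ T, x j = 0) : finrank F M ≤ T.card := by
  have hinj : Injective ((LinearMap.pi (fun j : T => LinearMap.proj (j : Fin n))).comp M.subtype) := by
    intro x y hxy
    ext j
    by_cases hj : j ∈ T
    · exact congrFun hxy ⟨j, hj⟩
    · rw [h x x.2 j hj, h y y.2 j hj]
  have := finrank_le_finrank_of_injective hinj
  simpa [Module.finrank_pi] using this

lemma exists_ne_zero_ker {V W : Type*} [AddCommGroup V] [Module F V] [AddCommGroup W] [Module F W]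
    [FiniteDimensional F V] [FiniteDimensional F W] (f : V →ₗ[F] W) (p : Submodule F V)
    (h : finrank F W < finrank F p) : ∃ x ∈ p, x ≠ 0 ∧ f x = 0 := by
  have h1 := rank_nullity_sub f p
  have h2 : finrank F (p.map f) ≤ finrank F W := Submodule.finrank_le _
  have h3 : 0 < finrank F (p ⊓ LinearMap.ker f : Submodule F V) := by omega
  have h4 : (p ⊓ LinearMap.ker f : Submodule F V) ≠ ⊥ := by
    intro hb
    rw [hb, finrank_bot] at h3
    omega
  obtain ⟨x, hx, hx0⟩ := (Submodule.ne_bot_iff _).mp h4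
  exact ⟨x, hx.1, hx0, hx.2⟩

lemma hammingNorm_le_card {x : Fin n → F} {T : Finset (Fin n)} (h : ∀ j ∉ T, x j = 0) :
    hammingNorm x ≤ T.card := by
  apply Finset.card_le_card
  intro j hj
  simp only [hammingNorm, Finset.mem_filter] at hj
  by_contra hjT
  exact hj.2 (h j hjT)

lemma one_le_finrank_of_mem {A : Submodule F (Fin n → F)} {x : Fin n → F}
    (hx : x ∈ A) (h0 : x ≠ 0) : 1 ≤ finrank F A := by
  by_contra h
  push_neg at h
  have hfr : finrank F A = 0 := by omega
  have hbA : A = ⊥ := Submodule.finrank_eq_zero.mp hfr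
  rw [hbA, Submodule.mem_bot] at hx
  exact h0 hx

lemma singleton_support (M : Submodule F (Fin n → F)) (I : Finset (Fin n))
    (hsupp : ∀ x ∈ M, ∀ j ∉ I, x j = 0) (hM : M ≠ ⊥) :
    ∃ m ∈ M, m ≠ 0 ∧ (hammingNorm m : ℤ) ≤ (I.card : ℤ) - finrank F M + 1 := by
  set r := finrank F M with hr
  have hr1 : 1 ≤ r := by
    obtain ⟨x, hx, hx0⟩ := (Submodule.ne_bot_iff _).mp hM
    exact one_le_finrank_of_mem hx hx0
  have hrI : r ≤ I.card := finrank_le_card_support M I hsupp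
  obtain ⟨T, hTI, hTcard⟩ := Finset.exists_subset_card_eq (show r - 1 ≤ I.card by omega)
  have hlt : finrank F ((j : T) → F) < finrank F M := by
    rw [Module.finrank_pi]
    simpa [hTcard] using by omega
  obtain ⟨m, hm, hm0, hmk⟩ := exists_ne_zero_ker
    (LinearMap.pi (fun j : T => LinearMap.proj (j : Fin n))) M hlt
  refine ⟨m, hm, hm0, ?_⟩
  have hsup : ∀ j ∉ I \ T, m j = 0 := by
    intro j hj
    rw [Finset.mem_sdiff] at hj
    push_neg at hj
    by_cases hjI : j ∈ I
    · exact congrFun hmk ⟨j, hj hjI⟩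
    · exact hsupp m hm j hjI
  have h1 := hammingNorm_le_card hsup
  have hcard : (I \ T).card = I.card - (r-1) := by
    rw [Finset.card_sdiff_of_subset hTI, hTcard]
  have h2 : hammingNorm m ≤ I.card - (r-1) := hcard ▸ h1
  omega

/-- Zero out coordinate `i`. -/
def zi (F : Type*) [Field F] {n : ℕ} (i : Fin n) : (Fin n → F) →ₗ[F] (Fin n → F) :=
  LinearMap.pi (fun j => if j = i then 0 else LinearMap.proj j)

lemma zi_apply (i : Fin n) (x : Fin n → F) (j : Fin n) :
    zi F i x j = if j = i then 0 else x j := by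
  simp only [zi, LinearMap.pi_apply]
  by_cases h : j = i <;> simp [h]

lemma zi_eq_zero_iff {i : Fin n} {x : Fin n → F} : zi F i x = 0 ↔ ∀ j ≠ i, x j = 0 := by
  constructor
  · intro h j hj
    have := congrFun h j
    rwa [zi_apply, if_neg hj] at this
  · intro h
    ext j
    rw [zi_apply]
    by_cases hj : j = i <;> simp [hj, h]

lemma mul_zi {i : Fin n} {a : Fin n → F} (b : Fin n → F) (ha : a i = 0) :
    a * (zi F i b) = a * b := by
  ext j
  simp only [Pi.mul_apply, zi_apply]
  by_cases hj : j = i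
  · subst hj; simp [ha]
  · rw [if_neg hj]

lemma finrank_map_zi_ge (B : Submodule F (Fin n → F)) (i : Fin n) :
    finrank F B ≤ finrank F (B.map (zi F i)) + 1 := by
  have h := rank_nullity_sub (zi F i) B
  have hker : finrank F (B ⊓ LinearMap.ker (zi F i) : Submodule F (Fin n → F)) ≤ 1 := by
    have := finrank_le_card_support (B ⊓ LinearMap.ker (zi F i)) {i} ?_
    · simpa using this
    · rintro x ⟨_, hxk⟩ j hj
      simp only [Finset.mem_singleton] at hj
      exact zi_eq_zero_iff.mp (LinearMap.mem_ker.mp hxk) j hj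
  omega

lemma finrank_map_zi_eq (B : Submodule F (Fin n → F)) (i : Fin n)
    (h : ∀ b ∈ B, (∀ j ≠ i, b j = 0) → b = 0) :
    finrank F (B.map (zi F i)) = finrank F B := by
  have hrn := rank_nullity_sub (zi F i) B
  have hbot : (B ⊓ LinearMap.ker (zi F i) : Submodule F (Fin n → F)) = ⊥ := by
    rw [Submodule.eq_bot_iff]
    rintro x ⟨hxB, hxk⟩
    exact h x hxB (zi_eq_zero_iff.mp (LinearMap.mem_ker.mp hxk))
  rw [hbot, finrank_bot] at hrn
  omega

lemma base_lemma (S : Finset (Fin n)) (B : Submodule F (Fin n → F)) (a b₀ : Fin n → F)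
    (hb₀ : b₀ ∈ B) (hab : a * b₀ ≠ 0)
    (hsB : ∀ b ∈ B, ∀ j ∉ S, b j = 0) :
    ∃ b ∈ B, a * b ≠ 0 ∧ (hammingNorm (a * b) : ℤ) ≤ (S.card : ℤ) - finrank F B + 1 := by
  classical
  set I := S.filter (fun j => a j ≠ 0) with hI
  have hIS : I ⊆ S := Finset.filter_subset _ _
  set f := LinearMap.mulLeft F a with hf
  set M := B.map f with hM
  have hfap : ∀ (b : Fin n → F) (j : Fin n), f b j = a j * b j := by
    intro b j; rw [hf, LinearMap.mulLeft_apply]; rfl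
  have hMsupp : ∀ x ∈ M, ∀ j ∉ I, x j = 0 := by
    rintro x ⟨b, hb, rfl⟩ j hj
    rw [hfap]
    simp only [hI, Finset.mem_filter, not_and, not_not] at hj
    by_cases hjS : j ∈ S
    · rw [hj hjS, zero_mul]
    · rw [hsB b hb j hjS, mul_zero]
  have hMne : M ≠ ⊥ := by
    rw [Submodule.ne_bot_iff]
    exact ⟨a * b₀, ⟨b₀, hb₀, (LinearMap.mulLeft_apply F a b₀)⟩, hab⟩
  have hker : finrank F (B ⊓ LinearMap.ker f : Submodule F (Fin n → F)) ≤ (S \ I).card := by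
    apply finrank_le_card_support
    rintro x ⟨hxB, hxk⟩ j hj
    rw [Finset.mem_sdiff, not_and, not_not] at hj
    by_cases hjS : j ∈ S
    · have hjI := hj hjS
      rw [hI, Finset.mem_filter] at hjI
      have haj : a j ≠ 0 := hjI.2
      have := congrFun (LinearMap.mem_ker.mp hxk) j
      rw [hfap] at this
      exact (mul_eq_zero.mp this).resolve_left haj
    · exact hsB x hxB j hjS
  have hrn := rank_nullity_sub f B
  rw [← hM] at hrn
  have hcardSI : (S \ I).card = S.card - I.card := Finset.card_sdiff_of_subset hIS
  have hIcard : I.card ≤ S.card := Finset.card_le_card hIS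
  obtain ⟨mm, hmM, hm0, hmw⟩ := singleton_support M I hMsupp hMne
  obtain ⟨b, hbB, rfl⟩ := hmM
  have hfb : f b = a * b := LinearMap.mulLeft_apply F a b
  rw [hfb] at hm0 hmw
  exact ⟨b, hbB, hm0, by omega⟩

lemma main_lemma (m : ℕ) : ∀ (S : Finset (Fin n)) (A B : Submodule F (Fin n → F)),
    S.card = m →
    (∀ a ∈ A, ∀ j ∉ S, a j = 0) → (∀ b ∈ B, ∀ j ∉ S, b j = 0) →
    (∃ a ∈ A, ∃ b ∈ B, a * b ≠ 0) →
    ∃ a ∈ A, ∃ b ∈ B, a * b ≠ 0 ∧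
      (hammingNorm (a * b) : ℤ) ≤
        max 1 ((S.card : ℤ) - finrank F A - finrank F B + 2) := by
  induction m using Nat.strong_induction_on with
  | _ m ih =>
  rintro S A B hSm hsA hsB ⟨a₀, ha₀, b₀, hb₀, hab₀⟩
  classical
  -- basic facts
  obtain ⟨j₀, hj₀⟩ : ∃ j, (a₀ * b₀) j ≠ 0 := by
    by_contra h; push_neg at h; exact hab₀ (funext h)
  have ha₀j : a₀ j₀ ≠ 0 := fun h => hj₀ (by simp [Pi.mul_apply, h])
  have hb₀j : b₀ j₀ ≠ 0 := fun h => hj₀ (by simp [Pi.mul_apply, h])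
  have hj₀S : j₀ ∈ S := by
    by_contra h
    exact ha₀j (hsA a₀ ha₀ j₀ h)
  have ha₀0 : a₀ ≠ 0 := fun h => ha₀j (by rw [h]; rfl)
  have hb₀0 : b₀ ≠ 0 := fun h => hb₀j (by rw [h]; rfl)
  have hdA1 : 1 ≤ finrank F A := one_le_finrank_of_mem ha₀ ha₀0
  have hdB1 : 1 ≤ finrank F B := one_le_finrank_of_mem hb₀ hb₀0
  by_cases hdA : finrank F A = 1
  · -- base case on A
    obtain ⟨b, hbB, hab, hw⟩ := base_lemma S B a₀ b₀ hb₀ hab₀ hsB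
    exact ⟨a₀, ha₀, b, hbB, hab, le_trans (by rw [hdA]; push_cast; omega)
      (le_max_right _ _)⟩
  by_cases hdB : finrank F B = 1
  · obtain ⟨a, haA, hba, hw⟩ := base_lemma S A b₀ a₀ ha₀ (by rwa [mul_comm]) hsA
    refine ⟨a, haA, b₀, hb₀, by rwa [mul_comm], ?_⟩
    rw [mul_comm]
    exact le_trans (by rw [hdB]; push_cast at hw ⊢; omega) (le_max_right _ _)
  -- now both dims ≥ 2
  have hdA2 : 2 ≤ finrank F A := by omega
  have hdB2 : 2 ≤ finrank F B := by omega
  have hm1 : 1 ≤ m := by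
    rw [← hSm]; exact Finset.card_pos.mpr ⟨j₀, hj₀S⟩
  by_cases hcaseA : ∃ i ∈ S, ∀ a ∈ A, a i = 0
  · obtain ⟨i, hiS, hiA⟩ := hcaseA
    set B' := B.map (zi F i) with hB'
    have hrec := ih (m - 1) (by omega) (S.erase i) A B'
      (by rw [Finset.card_erase_of_mem hiS, hSm])
      (by intro a ha j hj
          by_cases hji : j = i
          · exact hji ▸ hiA a ha
          · exact hsA a ha j (fun hjS => hj (Finset.mem_erase.mpr ⟨hji, hjS⟩)))
      (by rintro x ⟨b, hb, rfl⟩ j hj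
          rw [zi_apply]
          by_cases hji : j = i
          · simp [hji]
          · rw [if_neg hji]
            exact hsB b hb j (fun hjS => hj (Finset.mem_erase.mpr ⟨hji, hjS⟩)))
      (⟨a₀, ha₀, zi F i b₀, ⟨b₀, hb₀, rfl⟩, by rwa [mul_zi b₀ (hiA a₀ ha₀)]⟩)
    obtain ⟨a, haA, b', hb'B, hab, hw⟩ := hrec
    obtain ⟨b, hbB, rfl⟩ := hb'B
    rw [mul_zi b (hiA a haA)] at hab hw
    refine ⟨a, haA, b, hbB, hab, le_trans hw (max_le_max le_rfl ?_)⟩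
    have hd1 := finrank_map_zi_ge B i
    rw [← hB'] at hd1
    rw [Finset.card_erase_of_mem hiS]
    push_cast [hSm]
    omega
  by_cases hcaseB : ∃ i ∈ S, ∀ b ∈ B, b i = 0
  · obtain ⟨i, hiS, hiB⟩ := hcaseB
    set A' := A.map (zi F i) with hA'
    have hrec := ih (m - 1) (by omega) (S.erase i) A' B
      (by rw [Finset.card_erase_of_mem hiS, hSm])
      (by rintro x ⟨a, ha, rfl⟩ j hj
          rw [zi_apply]
          by_cases hji : j = i
          · simp [hji]
          · rw [if_neg hji]
            exact hsA a ha j (fun hjS => hj (Finset.mem_erase.mpr ⟨hji, hjS⟩)))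
      (by intro b hb j hj
          by_cases hji : j = i
          · exact hji ▸ hiB b hb
          · exact hsB b hb j (fun hjS => hj (Finset.mem_erase.mpr ⟨hji, hjS⟩)))
      (⟨zi F i a₀, ⟨a₀, ha₀, rfl⟩, b₀, hb₀, by
        rw [mul_comm, mul_zi a₀ (hiB b₀ hb₀), mul_comm]; exact hab₀⟩)
    obtain ⟨a', ha'A, b, hbB, hab, hw⟩ := hrec
    obtain ⟨a, haA, rfl⟩ := ha'A
    rw [mul_comm, mul_zi a (hiB b hbB), mul_comm] at hab hw
    refine ⟨a, haA, b, hbB, hab, le_trans hw (max_le_max le_rfl ?_)⟩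
    have hd1 := finrank_map_zi_ge A i
    rw [← hA'] at hd1
    rw [Finset.card_erase_of_mem hiS]
    push_cast [hSm]
    omega
  -- full support case
  push_neg at hcaseA hcaseB
  set i := j₀ with hi
  by_cases hc1 : ∃ b ∈ B, b ≠ 0 ∧ ∀ j ≠ i, b j = 0
  · obtain ⟨b, hbB, hb0, hbsupp⟩ := hc1
    have hbi : b i ≠ 0 := by
      intro h
      apply hb0
      ext j
      by_cases hj : j = i
      · rw [hj, h]; rfl
      · rw [hbsupp j hj]; rfl
    refine ⟨a₀, ha₀, b, hbB, ?_, ?_⟩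
    · intro h
      have := congrFun h i
      simp only [Pi.mul_apply, Pi.zero_apply] at this
      exact (mul_ne_zero ha₀j hbi) this
    · have hw : hammingNorm (a₀ * b) ≤ ({i} : Finset (Fin n)).card := by
        apply hammingNorm_le_card
        intro j hj
        simp only [Finset.mem_singleton] at hj
        simp [Pi.mul_apply, hbsupp j hj]
      simp only [Finset.card_singleton] at hw
      exact le_trans (by exact_mod_cast hw) (le_max_left _ _)
  by_cases hc2 : ∃ a ∈ A, a ≠ 0 ∧ ∀ j ≠ i, a j = 0
  · obtain ⟨a, haA, ha0, hasupp⟩ := hc2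
    have hai : a i ≠ 0 := by
      intro h
      apply ha0
      ext j
      by_cases hj : j = i
      · rw [hj, h]; rfl
      · rw [hasupp j hj]; rfl
    refine ⟨a, haA, b₀, hb₀, ?_, ?_⟩
    · intro h
      have := congrFun h i
      simp only [Pi.mul_apply, Pi.zero_apply] at this
      exact (mul_ne_zero hai hb₀j) this
    · have hw : hammingNorm (a * b₀) ≤ ({i} : Finset (Fin n)).card := by
        apply hammingNorm_le_card
        intro j hj
        simp only [Finset.mem_singleton] at hj
        simp [Pi.mul_apply, hasupp j hj]
      simp only [Finset.card_singleton] at hw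
      exact le_trans (by exact_mod_cast hw) (le_max_left _ _)
  -- generic step
  push_neg at hc1 hc2
  set A' := (A ⊓ LinearMap.ker (LinearMap.proj i) : Submodule F (Fin n → F)) with hA'
  set B' := B.map (zi F i) with hB'
  have hdA' : finrank F A ≤ finrank F A' + 1 := by
    have h := rank_nullity_sub (LinearMap.proj (R := F) (φ := fun _ : Fin n => F) i) A
    have : finrank F (A.map (LinearMap.proj i)) ≤ 1 := by
      have := Submodule.finrank_le (A.map (LinearMap.proj (R := F) (φ := fun _ : Fin n => F) i))
      simpa using this
    rw [← hA'] at h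
    omega
  have hdB' : finrank F B' = finrank F B := by
    rw [hB']
    apply finrank_map_zi_eq
    intro b hb hbs
    by_contra hb0
    obtain ⟨j, hji, hbj⟩ := hc1 b hb hb0
    exact hbj (hbs j hji)
  have hA'ne : A' ≠ ⊥ := by
    have : 1 ≤ finrank F A' := by omega
    intro h
    rw [h, finrank_bot] at this
    omega
  obtain ⟨x, hxA', hx0⟩ := (Submodule.ne_bot_iff _).mp hA'ne
  have hxi : x i = 0 := hxA'.2
  obtain ⟨j₁, hj₁⟩ : ∃ j, x j ≠ 0 := by
    by_contra h; push_neg at h; exact hx0 (funext h)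
  have hj₁i : j₁ ≠ i := fun h => hj₁ (h ▸ hxi)
  have hj₁S : j₁ ∈ S := by
    by_contra h
    exact hj₁ (hsA x hxA'.1 j₁ h)
  obtain ⟨y, hyB, hyj₁⟩ := hcaseB j₁ hj₁S
  have hrec := ih (m - 1) (by omega) (S.erase i) A' B'
    (by rw [Finset.card_erase_of_mem hj₀S, hSm])
    (by rintro a ⟨haA, hak⟩ j hj
        by_cases hji : j = i
        · exact hji ▸ hak
        · exact hsA a haA j (fun hjS => hj (Finset.mem_erase.mpr ⟨hji, hjS⟩)))
    (by rintro z ⟨b, hb, rfl⟩ j hj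
        rw [zi_apply]
        by_cases hji : j = i
        · simp [hji]
        · rw [if_neg hji]
          exact hsB b hb j (fun hjS => hj (Finset.mem_erase.mpr ⟨hji, hjS⟩)))
    (⟨x, hxA', zi F i y, ⟨y, hyB, rfl⟩, by
      rw [mul_zi y hxi]
      intro h
      have := congrFun h j₁
      simp only [Pi.mul_apply, Pi.zero_apply] at this
      exact (mul_ne_zero hj₁ hyj₁) this⟩)
  obtain ⟨a, haA', b', hb'B, hab, hw⟩ := hrec
  obtain ⟨b, hbB, rfl⟩ := hb'B
  rw [mul_zi b haA'.2] at hab hw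
  refine ⟨a, haA'.1, b, hbB, hab, le_trans hw (max_le_max le_rfl ?_)⟩
  rw [Finset.card_erase_of_mem hj₀S]
  push_cast [hSm]
  omega

end Aux

theorem stmt6 {F : Type*} [Field F] [Fintype F] [DecidableEq F] {n k : ℕ}
    (C : Submodule F (Fin n → F)) (hk : Module.finrank F C = k)
    (hne : prodCode F C C ≠ ⊥) :
    (dmin (prodCode F C C) : ℤ) ≤ max 1 ((n : ℤ) - 2 * k + 2) := by
  classical
  have hex : ∃ a ∈ C, ∃ b ∈ C, a * b ≠ 0 := by
    by_contra h
    push_neg at h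
    apply hne
    rw [prodCode, Submodule.span_eq_bot]
    rintro z ⟨c, hc, c', hc', rfl⟩
    exact h c hc c' hc'
  obtain ⟨a, haC, b, hbC, hab, hw⟩ := main_lemma (Finset.univ.card) (Finset.univ : Finset (Fin n)) C C rfl
    (by intro a _ j hj; exact absurd (Finset.mem_univ j) hj)
    (by intro a _ j hj; exact absurd (Finset.mem_univ j) hj) hex
  have hmem : a * b ∈ prodCode F C C := Submodule.subset_span ⟨a, haC, b, hbC, rfl⟩
  have hdle : dmin (prodCode F C C) ≤ hammingNorm (a * b) :=
    Nat.sInf_le ⟨a * b, hmem, hab, rfl⟩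
  have hcast : (dmin (prodCode F C C) : ℤ) ≤ (hammingNorm (a * b) : ℤ) := by exact_mod_cast hdle
  refine le_trans hcast (le_trans hw (max_le_max le_rfl ?_))
  simp only [Finset.card_univ, Fintype.card_fin, hk]
  push_cast
  omega


end
end

section
/- Over F_2 (or any F_q), let C ⊆ F_q^4 be the linear code with generator matrix rows (1,1,0,0) and (0,0,1,1). Then C^(3) = C, dim C = 2, and dmin(C^(3)) = 2 = t - 1 for t = 3, showing the bound max(t-1, n+t-tk) = 2 in the product Singleton bound is attained when tk > n. -/
noncomputable section

/-!
Under the componentwise product the two generators `e₁ = (1,1,0,0)` and `e₂ = (0,0,1,1)` are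
orthogonal idempotents (`eᵢ * eᵢ = eᵢ`, `e₁ * e₂ = 0`), so `C * C = C` and every power `C^(t)`,
`t ≥ 1`, equals `C`. A codeword `a • e₁ + b • e₂ = (a, a, b, b)` has weight `2 · wt (a, b)`, so the
minimum distance is `2`, attained by `e₁`.
-/

theorem Submodule.span_mul_span_self_of_orthogonal_idempotents {R A : Type*} [CommSemiring R]
    [Semiring A] [Algebra R A] {S : Set A} (hidem : ∀ s ∈ S, s * s = s)
    (horth : ∀ s ∈ S, ∀ t ∈ S, s ≠ t → s * t = 0) :
    span R S * span R S = span R S := by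
  rw [span_mul_span]
  refine le_antisymm (span_le.2 ?_) (span_mono fun s hs => ⟨s, hs, s, hs, hidem s hs⟩)
  rintro _ ⟨s, hs, t, ht, rfl⟩
  dsimp only
  by_cases hst : s = t
  · subst hst
    rw [hidem s hs]
    exact subset_span hs
  · rw [horth s hs t ht hst]
    exact zero_mem _

section ProductCode

variable {F : Type*} [Field F] {n : ℕ}

theorem prodCode_eq_mul (C C' : Submodule F (Fin n → F)) : prodCode F C C' = C * C' := by
  rw [Submodule.mul_eq_span_mul_set, prodCode]
  congr 1
  ext z
  simp only [Set.mem_ofPred_eq, Set.mem_mul, SetLike.mem_coe]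
  grind

theorem powCode_succ_eq_self_of_mul_self {C : Submodule F (Fin n → F)} (h : C * C = C) :
    ∀ t, powCode F C (t + 1) = C
  | 0 => rfl
  | t + 1 => by
    rw [powCode, prodCode_eq_mul, powCode_succ_eq_self_of_mul_self h t, h]

theorem dmin_eq_of_forall_le [DecidableEq F] {C : Submodule F (Fin n → F)} {w : ℕ}
    {c : Fin n → F} (hc : c ∈ C) (hc0 : c ≠ 0) (hcw : hammingNorm c = w)
    (hle : ∀ x ∈ C, x ≠ 0 → w ≤ hammingNorm x) : dmin C = w :=
  le_antisymm (Nat.sInf_le ⟨c, hc, hc0, hcw⟩)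
    (le_csInf ⟨w, c, hc, hc0, hcw⟩ (by rintro _ ⟨x, hx, hx0, rfl⟩; exact hle x hx hx0))

end ProductCode

section BlockRepetitionCode

variable (F : Type*) [Field F]

def blockRepetitionCode : Submodule F (Fin 4 → F) :=
  Submodule.span F {![1, 1, 0, 0], ![0, 0, 1, 1]}

theorem blockRepetitionCode_mul_self :
    blockRepetitionCode F * blockRepetitionCode F = blockRepetitionCode F := by
  refine Submodule.span_mul_span_self_of_orthogonal_idempotents ?_ ?_
  · rintro s (rfl | rfl) <;> ext i <;> fin_cases i <;> simp
  · rintro s (rfl | rfl) t (rfl | rfl) hst <;>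
      first | exact absurd rfl hst | (ext i; fin_cases i <;> simp)

theorem finrank_blockRepetitionCode : Module.finrank F (blockRepetitionCode F) = 2 := by
  have hli : LinearIndependent F ![(![1, 1, 0, 0] : Fin 4 → F), ![0, 0, 1, 1]] := by
    rw [LinearIndependent.pair_iff]
    intro s t h
    exact ⟨by simpa using congrFun h 0, by simpa using congrFun h 2⟩
  rw [blockRepetitionCode, ← Matrix.range_cons_cons_empty]
  simpa using finrank_span_eq_card hli

variable {F} [DecidableEq F]

theorem hammingNorm_blockRepetition_smul_add_smul (a b : F) :
    hammingNorm (a • ![1, 1, 0, 0] + b • ![0, 0, 1, 1] : Fin 4 → F) = 2 * hammingNorm ![a, b] := by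
  simp only [hammingNorm, Finset.card_filter, Fin.sum_univ_four, Fin.sum_univ_two]
  by_cases ha : a = 0 <;> by_cases hb : b = 0 <;> simp [ha, hb]

theorem two_le_hammingNorm_of_mem_blockRepetitionCode {x : Fin 4 → F}
    (hx : x ∈ blockRepetitionCode F) (hx0 : x ≠ 0) : 2 ≤ hammingNorm x := by
  obtain ⟨a, b, rfl⟩ := Submodule.mem_span_pair.1 hx
  have hab : ![a, b] ≠ 0 := by
    intro h
    apply hx0
    simp [show a = 0 from congrFun h 0, show b = 0 from congrFun h 1]
  rw [hammingNorm_blockRepetition_smul_add_smul]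
  have := hammingNorm_pos_iff.2 hab
  omega

theorem dmin_blockRepetitionCode : dmin (blockRepetitionCode F) = 2 := by
  refine dmin_eq_of_forall_le (c := ![1, 1, 0, 0]) (Submodule.subset_span (by simp)) ?_ ?_
    fun x hx hx0 => two_le_hammingNorm_of_mem_blockRepetitionCode hx hx0
  · exact fun h => by simpa using congrFun h 0
  · simp [hammingNorm, Finset.card_filter, Fin.sum_univ_four]

end BlockRepetitionCode

theorem stmt14_general {F : Type*} [Field F] [DecidableEq F]
    (C : Submodule F (Fin 4 → F))
    (hC : C = Submodule.span F {![1, 1, 0, 0], ![0, 0, 1, 1]}) :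
    powCode F C 3 = C ∧ Module.finrank F C = 2 ∧
      dmin (powCode F C 3) = 2 := by
  have hC : C = blockRepetitionCode F := hC
  subst hC
  have hpow := powCode_succ_eq_self_of_mul_self (blockRepetitionCode_mul_self F) 2
  refine ⟨hpow, finrank_blockRepetitionCode F, ?_⟩
  rw [hpow]
  exact dmin_blockRepetitionCode

theorem stmt14 {F : Type*} [Field F] [Fintype F] [DecidableEq F]
    (C : Submodule F (Fin 4 → F))
    (hC : C = Submodule.span F {![1, 1, 0, 0], ![0, 0, 1, 1]}) :
    powCode F C 3 = C ∧ Module.finrank F C = 2 ∧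
      dmin (powCode F C 3) = 2 :=
  stmt14_general C hC

end
end

section
/- The asymptotic function α_q^(t)(δ) = limsup_{n→∞} a_q^(t)(n, ⌊δn⌋)/n satisfies α_q^(t)(δ) ≤ (1-δ)/t for all 0 < δ ≤ 1, and α_q^(t)(0) = 1. In particular, for t ≥ 2 the function α_q^(t) is discontinuous at δ = 0. -/
noncomputable section
set_option linter.unusedSectionVars false
set_option synthInstance.maxHeartbeats 400000
set_option maxHeartbeats 1000000



/-- The generalized fundamental function `a_q^(t)(n,d)`. -/
def aFun (F : Type*) [Field F] [Fintype F] [DecidableEq F] (t n d : ℕ) : ℕ :=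
  sSup {k | ∃ C : Submodule F (Fin n → F), Module.finrank F C = k ∧
    ∀ z ∈ powCode F C t, z ≠ 0 → d ≤ hammingNorm z}

/-- The asymptotic fundamental function `α_q^(t)(δ)`. -/
def alphaFun (F : Type*) [Field F] [Fintype F] [DecidableEq F] (t : ℕ) (δ : ℝ) : ℝ :=
  Filter.limsup (fun n : ℕ => (aFun F t n ⌊δ * n⌋₊ : ℝ) / n) Filter.atTop


open Module Finset

namespace PSB

variable {F : Type*} [Field F] [DecidableEq F] {n : ℕ}

/-- functions vanishing on A -/
def K (A : Finset (Fin n)) : Submodule F (Fin n → F) where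
  carrier := {f | ∀ j ∈ A, f j = 0}
  zero_mem' := by intro j _; rfl
  add_mem' := by intro a b ha hb j hj; simp [ha j hj, hb j hj]
  smul_mem' := by intro r a ha j hj; simp [ha j hj]

/-- functions supported in A -/
def SuppIn (A : Finset (Fin n)) : Submodule F (Fin n → F) where
  carrier := {f | ∀ j, j ∉ A → f j = 0}
  zero_mem' := by intro j _; rfl
  add_mem' := by intro a b ha hb j hj; simp [ha j hj, hb j hj]
  smul_mem' := by intro r a ha j hj; simp [ha j hj]

@[simp] lemma mem_K {A : Finset (Fin n)} {f : Fin n → F} : f ∈ (K A : Submodule F (Fin n → F)) ↔ ∀ j ∈ A, f j = 0 := Iff.rfl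

@[simp] lemma mem_SuppIn {A : Finset (Fin n)} {f : Fin n → F} : f ∈ (SuppIn A : Submodule F (Fin n → F)) ↔ ∀ j, j ∉ A → f j = 0 := Iff.rfl

/-- restriction projection -/
def P (A : Finset (Fin n)) : (Fin n → F) →ₗ[F] (Fin n → F) where
  toFun := fun f j => if j ∈ A then f j else 0
  map_add' := by intro a b; funext j; by_cases h : j ∈ A <;> simp [h]
  map_smul' := by intro r a; funext j; by_cases h : j ∈ A <;> simp [h]

lemma P_apply {A : Finset (Fin n)} (f : Fin n → F) (j : Fin n) :
    P A f j = if j ∈ A then f j else 0 := rfl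

lemma ker_P (A : Finset (Fin n)) : LinearMap.ker (P (F := F) (n := n) A) = K A := by
  ext f
  simp only [LinearMap.mem_ker, mem_K]
  constructor
  · intro h j hj
    have := congrFun h j
    simpa [P_apply, hj] using this
  · intro h
    funext j
    by_cases hj : j ∈ A <;> simp [P_apply, hj, h]

lemma P_eq_of_subset {A B : Finset (Fin n)} (hAB : A ⊆ B) (f : Fin n → F) :
    P A (P B f) = P A f := by
  funext j
  by_cases hj : j ∈ A
  · simp [P_apply, hj, hAB hj]
  · simp [P_apply, hj]

lemma P_eq_self {A : Finset (Fin n)} {f : Fin n → F} (h : ∀ j, j ∉ A → f j = 0) :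
    P A f = f := by
  funext j
  by_cases hj : j ∈ A
  · simp [P_apply, hj]
  · simp [P_apply, hj, h j hj]

lemma K_union (A B : Finset (Fin n)) : (K (A ∪ B) : Submodule F (Fin n → F)) = K A ⊓ K B := by
  ext f
  simp only [mem_K, Submodule.mem_inf]
  constructor
  · intro h; exact ⟨fun j hj => h j (mem_union_left _ hj), fun j hj => h j (mem_union_right _ hj)⟩
  · rintro ⟨h1, h2⟩ j hj
    rcases mem_union.1 hj with h | h
    · exact h1 j h
    · exact h2 j h

/-- rank ≤ card of support set -/
lemma finrank_le_card_of_le_SuppIn (E : Submodule F (Fin n → F)) (A : Finset (Fin n))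
    (h : E ≤ SuppIn A) : finrank F E ≤ A.card := by
  classical
  let f : E →ₗ[F] (A → F) :=
    { toFun := fun e j => (e : Fin n → F) j,
      map_add' := by intro a b; rfl,
      map_smul' := by intro r a; rfl }
  have hinj : Function.Injective f := by
    intro a b hab
    ext j
    by_cases hj : j ∈ A
    · exact congrFun hab ⟨j, hj⟩
    · rw [h a.2 j hj, h b.2 j hj]
  calc finrank F E ≤ finrank F (A → F) := LinearMap.finrank_le_finrank_of_injective hinj
    _ = A.card := by rw [Module.finrank_pi]; exact Fintype.card_coe A

/-- rank-nullity for restriction -/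
lemma finrank_map_P_add (E : Submodule F (Fin n → F)) (A : Finset (Fin n)) :
    finrank F (Submodule.map (P (F := F) A) E) + finrank F (E ⊓ K A : Submodule F (Fin n → F))
      = finrank F E := by
  classical
  have := LinearMap.finrank_range_add_finrank_ker ((P (F := F) (n := n) A).comp E.subtype)
  rw [LinearMap.range_comp, Submodule.range_subtype] at this
  have hker : LinearMap.ker ((P (F := F) (n := n) A).comp E.subtype)
      = Submodule.comap E.subtype (E ⊓ K A) := by
    rw [LinearMap.ker_comp, ker_P]
    ext x
    simp [x.2]
  rw [hker] at this
  have e := Submodule.comapSubtypeEquivOfLe (p := E ⊓ K A) (q := E) inf_le_left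
  have h2 : finrank F (Submodule.comap E.subtype (E ⊓ K A)) = finrank F (E ⊓ K A : Submodule F (Fin n → F)) :=
    e.finrank_eq
  omega

lemma finrank_le_map_P_add (E : Submodule F (Fin n → F)) (A : Finset (Fin n)) :
    finrank F E ≤ finrank F (Submodule.map (P (F := F) A) E)
      + finrank F (E ⊓ K A : Submodule F (Fin n → F)) :=
  (finrank_map_P_add E A).ge

lemma finrank_map_P_mono_space {E E' : Submodule F (Fin n → F)} (h : E ≤ E') (A : Finset (Fin n)) :
    finrank F (Submodule.map (P (F := F) A) E) ≤ finrank F (Submodule.map (P (F := F) A) E') :=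
  Submodule.finrank_mono (Submodule.map_mono h)

lemma finrank_map_P_le (E : Submodule F (Fin n → F)) (A : Finset (Fin n)) :
    finrank F (Submodule.map (P (F := F) A) E) ≤ finrank F E := by
  have := finrank_map_P_add E A; omega

lemma finrank_map_P_mono_set (E : Submodule F (Fin n → F)) {A B : Finset (Fin n)} (h : A ⊆ B) :
    finrank F (Submodule.map (P (F := F) A) E) ≤ finrank F (Submodule.map (P (F := F) B) E) := by
  have hmap : (P (F := F) (n := n) A) = (P (F := F) A).comp (P (F := F) B) := by
    apply LinearMap.ext
    intro f
    exact (P_eq_of_subset h f).symm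
  calc finrank F (Submodule.map (P (F := F) A) E)
      = finrank F (Submodule.map (P (F := F) A) (Submodule.map (P (F := F) B) E)) := by
        conv_lhs => rw [hmap, Submodule.map_comp]
    _ ≤ finrank F (Submodule.map (P (F := F) B) E) := finrank_map_P_le _ _

/-- support of a code as a finset (classical) -/
def csupp (B : Submodule F (Fin n → F)) : Finset (Fin n) :=
  @Finset.filter _ (fun j => ∃ c ∈ B, c j ≠ 0) (Classical.decPred _) univ

lemma mem_csupp {B : Submodule F (Fin n → F)} {j : Fin n} :
    j ∈ csupp B ↔ ∃ c ∈ B, c j ≠ 0 := by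
  unfold csupp
  constructor
  · intro h
    exact ((@Finset.mem_filter _ _ (Classical.decPred _) _ _).1 h).2
  · intro h
    exact (@Finset.mem_filter _ _ (Classical.decPred _) _ _).2 ⟨mem_univ _, h⟩

lemma eq_zero_of_notMem_csupp {B : Submodule F (Fin n → F)} {c : Fin n → F} (hc : c ∈ B)
    {j : Fin n} (hj : j ∉ csupp B) : c j = 0 := by
  by_contra h
  exact hj (mem_csupp.2 ⟨c, hc, h⟩)

lemma csupp_nonempty_of_ne_bot {B : Submodule F (Fin n → F)} (h : B ≠ ⊥) :
    (csupp B).Nonempty := by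
  obtain ⟨c, hc, hc0⟩ := Submodule.exists_mem_ne_zero_of_ne_bot h
  obtain ⟨j, hj⟩ : ∃ j, c j ≠ 0 := by
    by_contra hall
    push_neg at hall
    exact hc0 (funext hall)
  exact ⟨j, mem_csupp.2 ⟨c, hc, hj⟩⟩

/-- weight support of a vector -/
def wsupp (x : Fin n → F) : Finset (Fin n) := univ.filter (fun j => x j ≠ 0)

lemma mem_wsupp {x : Fin n → F} {j : Fin n} : j ∈ wsupp x ↔ x j ≠ 0 := by simp [wsupp]

lemma hammingNorm_eq_card_wsupp (x : Fin n → F) : hammingNorm x = (wsupp x).card := by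
  unfold hammingNorm wsupp
  congr 1

lemma hammingNorm_le_card_of_suppIn {x : Fin n → F} {A : Finset (Fin n)}
    (h : ∀ j, j ∉ A → x j = 0) : hammingNorm x ≤ A.card := by
  rw [hammingNorm_eq_card_wsupp]
  apply card_le_card
  intro j hj
  by_contra hjA
  exact (mem_wsupp.1 hj) (h j hjA)

lemma hammingNorm_mul_le_right (x z : Fin n → F) : hammingNorm (x * z) ≤ hammingNorm z := by
  rw [hammingNorm_eq_card_wsupp, hammingNorm_eq_card_wsupp]
  apply card_le_card
  intro j hj
  rw [mem_wsupp] at hj ⊢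
  intro h
  exact hj (by simp [Pi.mul_apply, h])

lemma map_P_le_SuppIn (E : Submodule F (Fin n → F)) (A : Finset (Fin n)) :
    Submodule.map (P (F := F) A) E ≤ SuppIn A := by
  rintro f ⟨g, _, rfl⟩ j hj
  simp [P_apply, hj]

lemma sum_univ_ite {m : ℕ} (a : Fin m) (u : ℕ) (v : Fin m → ℕ) :
    ∑ i, (if i = a then u else v i) = u + ∑ i ∈ univ.erase a, v i := by
  rw [← Finset.add_sum_erase _ _ (mem_univ a)]
  congr 1
  · simp
  · apply Finset.sum_congr rfl
    intro i hi
    rw [if_neg (Finset.ne_of_mem_erase hi)]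

/-- Singleton bound, support version. -/
lemma singleton_bound (B : Submodule F (Fin n → F)) (M : Finset (Fin n)) (w : ℕ)
    (hbot : B ≠ ⊥) (hsupp : B ≤ SuppIn M)
    (hw : ∀ c ∈ B, c ≠ 0 → w ≤ hammingNorm c) (hw1 : 1 ≤ w) :
    w + finrank F B ≤ M.card + 1 := by
  obtain ⟨c₀, hc₀, hc₀0⟩ := Submodule.exists_mem_ne_zero_of_ne_bot hbot
  have hwM : w ≤ M.card :=
    le_trans (hw c₀ hc₀ hc₀0) (hammingNorm_le_card_of_suppIn (fun j hj => hsupp hc₀ j hj))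
  obtain ⟨T, hTM, hTcard⟩ := Finset.exists_subset_card_eq (s := M) (n := w - 1) (by omega)
  have hker : (B ⊓ K (M \ T) : Submodule F (Fin n → F)) = ⊥ := by
    rw [Submodule.eq_bot_iff]
    intro f hf
    by_contra hf0
    have hsuppT : ∀ j, j ∉ T → f j = 0 := by
      intro j hj
      by_cases hjM : j ∈ M
      · exact hf.2 j (Finset.mem_sdiff.2 ⟨hjM, hj⟩)
      · exact hsupp hf.1 j hjM
    have h1 : w ≤ hammingNorm f := hw f hf.1 hf0
    have h2 : hammingNorm f ≤ T.card := hammingNorm_le_card_of_suppIn hsuppT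
    omega
  have := finrank_map_P_add B (M \ T)
  rw [hker, finrank_bot] at this
  have hrank : finrank F (Submodule.map (P (F := F) (M \ T)) B) ≤ (M \ T).card :=
    finrank_le_card_of_le_SuppIn _ _ (map_P_le_SuppIn _ _)
  have hcard : (M \ T).card = M.card - (w - 1) := by
    rw [Finset.card_sdiff_of_subset hTM, hTcard]
  omega

/-- the product Singleton bound statement, with measure `μ` -/
def MainStmt (F : Type*) [Field F] [DecidableEq F] (n : ℕ) (μ : ℕ) : Prop :=
  ∀ (m : ℕ) (M : Finset (Fin n)) (B : Fin m → Submodule F (Fin n → F)) (d : ℕ),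
    M.card + m ≤ μ → 1 ≤ m →
    (∀ i, B i ≠ ⊥) →
    (∀ i, B i ≤ SuppIn M) →
    (∀ i, ∀ j ∈ M, ∃ c ∈ B i, c j ≠ 0) →
    m + 1 ≤ d →
    (∀ z ∈ prodFamily F (fun i => B i), z ≠ 0 → d ≤ hammingNorm z) →
    d + ∑ i, finrank F (B i) ≤ M.card + m

lemma region {μ : ℕ} (IH : ∀ μ' < μ, MainStmt F n μ')
    {m : ℕ} {M : Finset (Fin n)} {B : Fin m → Submodule F (Fin n → F)} {d : ℕ}
    (hm : 1 ≤ m)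
    (hsupp : ∀ i, B i ≤ SuppIn M)
    (hfull : ∀ i, ∀ j ∈ M, ∃ c ∈ B i, c j ≠ 0)
    (hd : m + 1 ≤ d)
    (hwt : ∀ z ∈ prodFamily F (fun i => B i), z ≠ 0 → d ≤ hammingNorm z)
    (a : Fin m) (Z : Submodule F (Fin n → F)) (hZle : Z ≤ B a) (hZbot : Z ≠ ⊥)
    (hμW : (csupp Z).card + m < μ) :
    d + (finrank F Z + ∑ i ∈ univ.erase a, finrank F (Submodule.map (P (F := F) (csupp Z)) (B i)))
      ≤ (csupp Z).card + m := by
  set W := csupp Z with hWdef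
  have hWM : W ⊆ M := by
    intro j hj
    obtain ⟨c, hc, hcj⟩ := mem_csupp.1 hj
    by_contra hjM
    exact hcj (hsupp a (hZle hc) j hjM)
  have hWne : W.Nonempty := csupp_nonempty_of_ne_bot hZbot
  set B' : Fin m → Submodule F (Fin n → F) :=
    fun i => if i = a then Z else Submodule.map (P (F := F) W) (B i) with hB'def
  have hZsupp : Z ≤ SuppIn W := by
    intro c hc j hj
    exact eq_zero_of_notMem_csupp hc hj
  have hbot' : ∀ i, B' i ≠ ⊥ := by
    intro i
    by_cases hia : i = a
    · simpa [hB'def, hia] using hZbot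
    · obtain ⟨j, hj⟩ := hWne
      obtain ⟨c, hc, hcj⟩ := hfull i j (hWM hj)
      have : P (F := F) W c ∈ Submodule.map (P (F := F) W) (B i) := ⟨c, hc, rfl⟩
      rw [Submodule.ne_bot_iff]
      refine ⟨P (F := F) W c, by simpa [hB'def, hia] using this, ?_⟩
      intro h0
      apply hcj
      have := congrFun h0 j
      simpa [P_apply, hj] using this
  have hsupp' : ∀ i, B' i ≤ SuppIn W := by
    intro i
    by_cases hia : i = a
    · simpa [hB'def, hia] using hZsupp
    · simpa [hB'def, hia] using map_P_le_SuppIn (B i) W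
  have hfull' : ∀ i, ∀ j ∈ W, ∃ c ∈ B' i, c j ≠ 0 := by
    intro i j hj
    by_cases hia : i = a
    · obtain ⟨c, hc, hcj⟩ := mem_csupp.1 hj
      exact ⟨c, by simpa [hB'def, hia] using hc, hcj⟩
    · obtain ⟨c, hc, hcj⟩ := hfull i j (hWM hj)
      refine ⟨P (F := F) W c, by simpa [hB'def, hia] using (⟨c, hc, rfl⟩ :
        P (F := F) W c ∈ Submodule.map (P (F := F) W) (B i)), ?_⟩
      simpa [P_apply, hj] using hcj
  have hle : prodFamily F (fun i => B' i) ≤ prodFamily F (fun i => B i) := by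
    apply Submodule.span_le.2
    rintro z ⟨c', hc', rfl⟩
    have hchoice : ∀ i, ∃ g, g ∈ B i ∧ (i ≠ a → P (F := F) W g = c' i) ∧ (i = a → g = c' i) := by
      intro i
      by_cases hia : i = a
      · have hci : c' i ∈ B' i := hc' i
        have hBi : B' i = Z := by rw [hB'def]; simp [hia]
        rw [hBi] at hci
        have hmem : c' i ∈ B a := hZle hci
        rw [← hia] at hmem
        exact ⟨c' i, hmem, fun h => absurd hia h, fun _ => rfl⟩
      · obtain ⟨g, hg, hgeq⟩ := Submodule.mem_map.1
          (show c' i ∈ Submodule.map (P (F := F) W) (B i) by simpa [hB'def, hia] using hc' i)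
        exact ⟨g, hg, fun _ => hgeq, fun h => absurd h hia⟩
    choose g hg hgP hgA using hchoice
    have heq : ∏ i, c' i = ∏ i, g i := by
      funext j
      rw [Finset.prod_apply, Finset.prod_apply]
      by_cases hjW : j ∈ W
      · apply Finset.prod_congr rfl
        intro i _
        by_cases hia : i = a
        · rw [hgA i hia]
        · rw [← hgP i hia]; simp [P_apply, hjW]
      · have hza : c' a j = 0 := (hsupp' a) (hc' a) j hjW
        have hga : g a j = 0 := by rw [hgA a rfl]; exact hza
        rw [Finset.prod_eq_zero (mem_univ a) hza, Finset.prod_eq_zero (mem_univ a) hga]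
    rw [heq]
    exact Submodule.subset_span ⟨g, hg, rfl⟩
  have hwt' : ∀ z ∈ prodFamily F (fun i => B' i), z ≠ 0 → d ≤ hammingNorm z :=
    fun z hz hz0 => hwt z (hle hz) hz0
  have hsub := IH (W.card + m) hμW m W B' d le_rfl hm hbot' hsupp' hfull' hd hwt'
  have hsum : ∑ i, finrank F (B' i)
      = finrank F Z + ∑ i ∈ univ.erase a, finrank F (Submodule.map (P (F := F) W) (B i)) := by
    rw [← sum_univ_ite a (finrank F Z) (fun i => finrank F (Submodule.map (P (F := F) W) (B i)))]
    apply Finset.sum_congr rfl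
    intro i _
    by_cases hia : i = a
    · have hBi : B' i = Z := by rw [hB'def]; simp [hia]
      rw [hBi, if_pos hia]
    · have hBi : B' i = Submodule.map (P (F := F) W) (B i) := by rw [hB'def]; simp [hia]
      rw [hBi, if_neg hia]
  omega

lemma claim_lemma {μ : ℕ} (IH : ∀ μ' < μ, MainStmt F n μ')
    {m : ℕ} {M : Finset (Fin n)} {B : Fin m → Submodule F (Fin n → F)} {d : ℕ}
    (hm : 1 ≤ m)
    (hsupp : ∀ i, B i ≤ SuppIn M)
    (hfull : ∀ i, ∀ j ∈ M, ∃ c ∈ B i, c j ≠ 0)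
    (hd : m + 1 ≤ d)
    (hwt : ∀ z ∈ prodFamily F (fun i => B i), z ≠ 0 → d ≤ hammingNorm z)
    (hμM : M.card + m ≤ μ) :
    ∀ (k : ℕ) (V : Finset (Fin n)), (M \ V).card ≤ k → V ⊆ M → V.Nonempty →
      ∃ V', V ⊆ V' ∧ V' ⊆ M ∧
        V.card + ∑ i, finrank F (B i ⊓ K V : Submodule F (Fin n → F)) ≤ V'.card := by
  intro k
  induction k with
  | zero =>
    intro V hk hVM hVne
    refine ⟨V, subset_rfl, hVM, ?_⟩
    have hker : ∀ i, (B i ⊓ K V : Submodule F (Fin n → F)) = ⊥ := by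
      intro i
      by_contra hne
      obtain ⟨j, hj⟩ := csupp_nonempty_of_ne_bot hne
      obtain ⟨c, hc, hcj⟩ := mem_csupp.1 hj
      have hjM : j ∈ M := by
        by_contra hjM
        exact hcj (hsupp i hc.1 j hjM)
      have hjV : j ∉ V := by
        intro hjV
        exact hcj (hc.2 j hjV)
      have : j ∈ M \ V := Finset.mem_sdiff.2 ⟨hjM, hjV⟩
      have : 0 < (M \ V).card := Finset.card_pos.2 ⟨j, this⟩
      omega
    have : ∑ i, finrank F (B i ⊓ K V : Submodule F (Fin n → F)) = 0 := by
      apply Finset.sum_eq_zero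
      intro i _
      rw [hker i, finrank_bot]
    omega
  | succ k IHk =>
    intro V hk hVM hVne
    by_cases hker : ∀ i, (B i ⊓ K V : Submodule F (Fin n → F)) = ⊥
    · refine ⟨V, subset_rfl, hVM, ?_⟩
      have : ∑ i, finrank F (B i ⊓ K V : Submodule F (Fin n → F)) = 0 := by
        apply Finset.sum_eq_zero
        intro i _
        rw [hker i, finrank_bot]
      omega
    · push_neg at hker
      obtain ⟨a, ha⟩ := hker
      set Z : Submodule F (Fin n → F) := B a ⊓ K V with hZdef
      set W := csupp Z with hWdef
      have hWdisjV : ∀ j ∈ W, j ∉ V := by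
        intro j hj hjV
        obtain ⟨c, hc, hcj⟩ := mem_csupp.1 hj
        exact hcj (hc.2 j hjV)
      have hWM : W ⊆ M := by
        intro j hj
        obtain ⟨c, hc, hcj⟩ := mem_csupp.1 hj
        by_contra hjM
        exact hcj (hsupp a hc.1 j hjM)
      have hWMV : W ⊆ M \ V := fun j hj => Finset.mem_sdiff.2 ⟨hWM hj, hWdisjV j hj⟩
      have hWne : W.Nonempty := csupp_nonempty_of_ne_bot ha
      have hcardMV : (M \ V).card = M.card - V.card := Finset.card_sdiff_of_subset hVM
      have hVpos : 0 < V.card := Finset.card_pos.2 hVne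
      have hVcardle : V.card ≤ M.card := card_le_card hVM
      have hμW : W.card + m < μ := by
        have h1 : W.card ≤ (M \ V).card := card_le_card hWMV
        omega
      have hreg := region IH hm hsupp hfull hd hwt a Z inf_le_left ha
        (by rw [← hWdef]; exact hμW)
      rw [← hWdef] at hreg
      have hWpos : 0 < W.card := Finset.card_pos.2 hWne
      have hsubk : (M \ (V ∪ W)).card ≤ k := by
        have hsubset : M \ (V ∪ W) ⊆ (M \ V) \ W := by
          intro j hj
          rw [Finset.mem_sdiff] at hj
          rw [Finset.mem_sdiff, Finset.mem_sdiff]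
          rw [Finset.mem_union] at hj
          push_neg at hj
          exact ⟨⟨hj.1, hj.2.1⟩, hj.2.2⟩
        have h1 : (M \ (V ∪ W)).card ≤ ((M \ V) \ W).card := card_le_card hsubset
        have h2 : ((M \ V) \ W).card = (M \ V).card - W.card := Finset.card_sdiff_of_subset hWMV
        omega
      obtain ⟨V', hV1, hV2, hV3⟩ := IHk (V ∪ W) hsubk (Finset.union_subset hVM hWM)
        (by obtain ⟨j, hj⟩ := hVne; exact ⟨j, Finset.mem_union_left _ hj⟩)
      refine ⟨V', le_trans Finset.subset_union_left hV1, hV2, ?_⟩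
      have hcardVW : (V ∪ W).card = V.card + W.card := by
        rw [Finset.card_union_of_disjoint]
        exact Finset.disjoint_left.2 (fun {j} hjV hjW => hWdisjV j hjW hjV)
      have hper : ∀ i : Fin m, finrank F (B i ⊓ K V : Submodule F (Fin n → F))
          ≤ (if i = a then finrank F Z
              else finrank F (Submodule.map (P (F := F) W) (B i)))
            + finrank F (B i ⊓ K (V ∪ W) : Submodule F (Fin n → F)) := by
        intro i
        by_cases hia : i = a
        · rw [if_pos hia, hia]
          exact Nat.le_add_right _ _
        · rw [if_neg hia]
          have h1 := finrank_le_map_P_add (B i ⊓ K V : Submodule F (Fin n → F)) W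
          have h2 : finrank F (Submodule.map (P (F := F) W) (B i ⊓ K V : Submodule F (Fin n → F)))
              ≤ finrank F (Submodule.map (P (F := F) W) (B i)) :=
            finrank_map_P_mono_space inf_le_left W
          have h3 : (B i ⊓ K V : Submodule F (Fin n → F)) ⊓ K W = B i ⊓ K (V ∪ W) := by
            rw [K_union, inf_assoc]
          rw [h3] at h1
          omega
      have hsumper := Finset.sum_le_sum (fun i (_ : i ∈ univ) => hper i)
      rw [Finset.sum_add_distrib, sum_univ_ite] at hsumper
      omega

theorem mainThm : ∀ μ : ℕ, MainStmt F n μ := by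
  intro μ
  induction μ using Nat.strong_induction_on with
  | _ μ IH =>
  intro m M B d hμ hm hbot hsupp hfull hd hwt
  obtain _ | m' := m
  · omega
  by_cases hm1 : m' = 0
  · -- base case: one code, usual Singleton bound
    subst hm1
    have hwt0 : ∀ c ∈ B 0, c ≠ 0 → d ≤ hammingNorm c := by
      intro c hc hc0
      apply hwt c _ hc0
      apply Submodule.subset_span
      refine ⟨fun _ => c, fun i => ?_, ?_⟩
      · have hi : i = 0 := by
          apply Fin.ext
          omega
        rw [hi]; exact hc
      · rw [Fin.prod_univ_one]
    have hsing := singleton_bound (B 0) M d (hbot 0) (hsupp 0) hwt0 (by omega)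
    have hsum : ∑ i, finrank F (B i) = finrank F (B 0) := Fin.sum_univ_one _
    omega
  · -- inductive step
    have hm'1 : 1 ≤ m' := Nat.one_le_iff_ne_zero.2 hm1
    set lst : Fin (m' + 1) := Fin.last m' with hlstdef
    obtain ⟨c₀, hc₀, hc₀0⟩ := Submodule.exists_mem_ne_zero_of_ne_bot (hbot lst)
    have hwsne : {w | ∃ c ∈ B lst, c ≠ 0 ∧ hammingNorm c = w}.Nonempty :=
      ⟨hammingNorm c₀, c₀, hc₀, hc₀0, rfl⟩
    obtain ⟨x, hx, hx0, hxw⟩ := Nat.sInf_mem hwsne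
    have hxmin : ∀ c ∈ B lst, c ≠ 0 → hammingNorm x ≤ hammingNorm c := by
      intro c hc hc0
      rw [hxw]
      exact Nat.sInf_le ⟨c, hc, hc0, rfl⟩
    set S := wsupp x with hSdef
    have hSM : S ⊆ M := by
      intro j hj
      by_contra hjM
      exact (mem_wsupp.1 hj) (hsupp lst hx j hjM)
    have hScard : S.card = hammingNorm x := (hammingNorm_eq_card_wsupp x).symm
    have hSne : S.Nonempty := by
      obtain ⟨j, hj⟩ : ∃ j, x j ≠ 0 := by
        by_contra hall
        push_neg at hall
        exact hx0 (funext hall)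
      exact ⟨j, mem_wsupp.2 hj⟩
    have hxpos : 1 ≤ hammingNorm x :=
      Nat.pos_of_ne_zero (fun h => hx0 (hammingNorm_eq_zero.1 h))
    by_cases hcase : ∀ i : Fin (m' + 1), i ≠ lst → (B i ⊓ K S : Submodule F (Fin n → F)) = ⊥
    · -- Case 1 : no other code vanishes on the support of x
      set B' : Fin m' → Submodule F (Fin n → F) :=
        fun i => Submodule.map (P (F := F) S) (B i.castSucc) with hB'def
      have hB'eq : ∀ i : Fin m', B' i = Submodule.map (P (F := F) S) (B i.castSucc) := by
        intro i; rw [hB'def]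
      have hμ' : S.card + m' < μ := by
        have := card_le_card hSM
        omega
      have hbot' : ∀ i, B' i ≠ ⊥ := by
        intro i
        obtain ⟨j, hj⟩ := hSne
        obtain ⟨c, hc, hcj⟩ := hfull i.castSucc j (hSM hj)
        rw [hB'eq i, Submodule.ne_bot_iff]
        refine ⟨P (F := F) S c, ⟨c, hc, rfl⟩, fun h0 => hcj ?_⟩
        have := congrFun h0 j
        simpa [P_apply, hj] using this
      have hsupp' : ∀ i : Fin m', B' i ≤ SuppIn S := by
        intro i; rw [hB'eq i]; exact map_P_le_SuppIn _ _
      have hfull' : ∀ i : Fin m', ∀ j ∈ S, ∃ c ∈ B' i, c j ≠ 0 := by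
        intro i j hj
        obtain ⟨c, hc, hcj⟩ := hfull i.castSucc j (hSM hj)
        rw [hB'eq i]
        exact ⟨P (F := F) S c, ⟨c, hc, rfl⟩, by simpa [P_apply, hj] using hcj⟩
      have hwt' : ∀ z ∈ prodFamily F (fun i => B' i), z ≠ 0 → d ≤ hammingNorm z := by
        intro z hz hz0
        have hzS : ∀ j, j ∉ S → z j = 0 := by
          have hle : prodFamily F (fun i => B' i) ≤ SuppIn S := by
            apply Submodule.span_le.2
            rintro w ⟨c', hc', rfl⟩ j hj
            rw [Finset.prod_apply]
            exact Finset.prod_eq_zero (mem_univ (⟨0, by omega⟩ : Fin m'))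
              ((hsupp' _) (hc' _) j hj)
          exact fun j hj => hle hz j hj
        have hmul : x * z ∈ prodFamily F (fun i => B i) := by
          have hmap : Submodule.map (LinearMap.mulLeft F x) (prodFamily F (fun i => B' i))
              ≤ prodFamily F (fun i => B i) := by
            unfold prodFamily
            rw [Submodule.map_span]
            apply Submodule.span_le.2
            rintro w ⟨w', ⟨c', hc', rfl⟩, rfl⟩
            have hc'' : ∀ i : Fin m', c' i ∈ Submodule.map (P (F := F) S) (B i.castSucc) := by
              intro i
              have h2 : c' i ∈ B' i := hc' i
              rwa [hB'eq i] at h2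
            choose g hg hgP using fun i => Submodule.mem_map.1 (hc'' i)
            refine Submodule.subset_span ⟨Fin.lastCases x (fun i => g i), ?_, ?_⟩
            · intro i
              refine Fin.lastCases ?_ ?_ i
              · simp only [Fin.lastCases_last]
                exact hx
              · intro i'
                simp only [Fin.lastCases_castSucc]
                exact hg i'
            · rw [Fin.prod_univ_castSucc]
              simp only [Fin.lastCases_castSucc, Fin.lastCases_last]
              funext j
              rw [LinearMap.mulLeft_apply]
              rw [Pi.mul_apply, Pi.mul_apply, Finset.prod_apply, Finset.prod_apply]
              by_cases hjS : j ∈ S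
              · have : ∀ i : Fin m', c' i j = g i j := by
                  intro i
                  rw [← hgP i]
                  simp [P_apply, hjS]
                rw [Finset.prod_congr rfl (fun i _ => this i)]
                ring
              · have hxj : x j = 0 := by
                  by_contra h
                  exact hjS (mem_wsupp.2 h)
                rw [hxj, zero_mul, mul_zero]
          exact hmap ⟨z, hz, rfl⟩
        have hne : x * z ≠ 0 := by
          obtain ⟨j, hj⟩ : ∃ j, z j ≠ 0 := by
            by_contra hall
            push_neg at hall
            exact hz0 (funext hall)
          have hjS : j ∈ S := by
            by_contra h
            exact hj (hzS j h)
          intro h0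
          have := congrFun h0 j
          rw [Pi.mul_apply] at this
          rcases mul_eq_zero.1 this with h | h
          · exact (mem_wsupp.1 hjS) h
          · exact hj h
        calc d ≤ hammingNorm (x * z) := hwt _ hmul hne
          _ ≤ hammingNorm z := hammingNorm_mul_le_right x z
      have hsub := IH (S.card + m') hμ' m' S B' d le_rfl hm'1 hbot' hsupp' hfull'
        (by omega) hwt'
      have hrank' : ∀ i : Fin m', finrank F (B' i) = finrank F (B i.castSucc) := by
        intro i
        have hk := finrank_map_P_add (B i.castSucc) S
        have hker : (B i.castSucc ⊓ K S : Submodule F (Fin n → F)) = ⊥ :=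
          hcase i.castSucc (Fin.castSucc_lt_last i).ne
        rw [hker, finrank_bot] at hk
        rw [hB'eq i]
        omega
      have hsing := singleton_bound (B lst) M (hammingNorm x) (hbot lst) (hsupp lst)
        hxmin hxpos
      have hsumsplit : ∑ i, finrank F (B i)
          = ∑ i : Fin m', finrank F (B i.castSucc) + finrank F (B lst) :=
        Fin.sum_univ_castSucc _
      have hsum' : ∑ i : Fin m', finrank F (B' i) = ∑ i : Fin m', finrank F (B i.castSucc) :=
        Finset.sum_congr rfl (fun i _ => hrank' i)
      omega
    · -- Case 2 : some other code vanishes on the support of x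
      push_neg at hcase
      obtain ⟨a0, ha0ne, ha0⟩ := hcase
      have hZ1le : (B a0 ⊓ K S : Submodule F (Fin n → F)) ≤ B a0 := inf_le_left
      set Z1 : Submodule F (Fin n → F) := B a0 ⊓ K S with hZ1def
      set W1 := csupp Z1 with hW1def
      have hW1S : ∀ j ∈ W1, j ∉ S := by
        intro j hj hjS
        obtain ⟨c, hc, hcj⟩ := mem_csupp.1 hj
        exact hcj (hc.2 j hjS)
      have hW1M : W1 ⊆ M := by
        intro j hj
        obtain ⟨c, hc, hcj⟩ := mem_csupp.1 hj
        by_contra hjM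
        exact hcj (hsupp a0 hc.1 j hjM)
      have hW1ne : W1.Nonempty := csupp_nonempty_of_ne_bot ha0
      have hW1MS : W1 ⊆ M \ S := fun j hj => Finset.mem_sdiff.2 ⟨hW1M hj, hW1S j hj⟩
      have hSpos : 0 < S.card := Finset.card_pos.2 hSne
      have hScardle : S.card ≤ M.card := card_le_card hSM
      have hcardMS : (M \ S).card = M.card - S.card := Finset.card_sdiff_of_subset hSM
      have hμ1 : W1.card + (m' + 1) < μ := by
        have := card_le_card hW1MS
        omega
      have hreg1 := region IH hm hsupp hfull hd hwt a0 Z1 hZ1le ha0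
        (by rw [← hW1def]; exact hμ1)
      rw [← hW1def] at hreg1
      -- second region, anchored at the last code
      have hxZ2 : x ∈ (B lst ⊓ K W1 : Submodule F (Fin n → F)) := by
        refine ⟨hx, fun j hj => ?_⟩
        by_contra h
        exact hW1S j hj (mem_wsupp.2 h)
      have hZ2bot : (B lst ⊓ K W1 : Submodule F (Fin n → F)) ≠ ⊥ :=
        Submodule.ne_bot_iff _ |>.2 ⟨x, hxZ2, hx0⟩
      set Z2 : Submodule F (Fin n → F) := B lst ⊓ K W1 with hZ2def
      set W2 := csupp Z2 with hW2def
      have hSW2 : S ⊆ W2 := by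
        intro j hj
        exact mem_csupp.2 ⟨x, hxZ2, mem_wsupp.1 hj⟩
      have hW2W1 : ∀ j ∈ W2, j ∉ W1 := by
        intro j hj hjW1
        obtain ⟨c, hc, hcj⟩ := mem_csupp.1 hj
        exact hcj (hc.2 j hjW1)
      have hW2M : W2 ⊆ M := by
        intro j hj
        obtain ⟨c, hc, hcj⟩ := mem_csupp.1 hj
        by_contra hjM
        exact hcj (hsupp lst hc.1 j hjM)
      have hW2MW1 : W2 ⊆ M \ W1 := fun j hj => Finset.mem_sdiff.2 ⟨hW2M hj, hW2W1 j hj⟩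
      have hW1pos : 0 < W1.card := Finset.card_pos.2 hW1ne
      have hW1cardle : W1.card ≤ M.card := card_le_card hW1M
      have hcardMW1 : (M \ W1).card = M.card - W1.card := Finset.card_sdiff_of_subset hW1M
      have hμ2 : W2.card + (m' + 1) < μ := by
        have := card_le_card hW2MW1
        omega
      have hreg2 := region IH hm hsupp hfull hd hwt lst Z2 inf_le_left hZ2bot
        (by rw [← hW2def]; exact hμ2)
      rw [← hW2def] at hreg2
      -- the claim: complete to a set covering all residual dimensions
      have hV12M : W1 ∪ W2 ⊆ M := Finset.union_subset hW1M hW2M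
      obtain ⟨V', hV'1, hV'2, hV'3⟩ := claim_lemma IH hm hsupp hfull hd hwt hμ
        ((M \ (W1 ∪ W2)).card) (W1 ∪ W2) le_rfl hV12M
        (by obtain ⟨j, hj⟩ := hW1ne; exact ⟨j, Finset.mem_union_left _ hj⟩)
      have hV'card : V'.card ≤ M.card := card_le_card hV'2
      have hcardV12 : (W1 ∪ W2).card = W1.card + W2.card := by
        rw [Finset.card_union_of_disjoint]
        exact Finset.disjoint_left.2 (fun {j} hjW1 hjW2 => hW2W1 j hjW2 hjW1)
      -- coverage inequality, code by code
      have hcov : ∀ i : Fin (m' + 1), finrank F (B i)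
          ≤ (if i = a0 then finrank F Z1
              else finrank F (Submodule.map (P (F := F) W1) (B i)))
            + (if i = lst then finrank F Z2
              else finrank F (Submodule.map (P (F := F) W2) (B i)))
            + finrank F (B i ⊓ K (W1 ∪ W2) : Submodule F (Fin n → F)) := by
        intro i
        by_cases hia : i = a0
        · rw [if_pos hia, if_neg (by rw [hia]; exact ha0ne), hia]
          have h1 := finrank_le_map_P_add (B a0) S
          rw [← hZ1def] at h1
          have h2 : finrank F (Submodule.map (P (F := F) S) (B a0))
              ≤ finrank F (Submodule.map (P (F := F) W2) (B a0)) :=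
            finrank_map_P_mono_set (B a0) hSW2
          omega
        · by_cases hil : i = lst
          · rw [if_neg hia, if_pos hil, hil]
            have h1 := finrank_le_map_P_add (B lst) W1
            rw [← hZ2def] at h1
            omega
          · rw [if_neg hia, if_neg hil]
            have h1 := finrank_le_map_P_add (B i) W1
            have h2 := finrank_le_map_P_add (B i ⊓ K W1 : Submodule F (Fin n → F)) W2
            have h3 : finrank F (Submodule.map (P (F := F) W2) (B i ⊓ K W1 : Submodule F (Fin n → F)))
                ≤ finrank F (Submodule.map (P (F := F) W2) (B i)) :=
              finrank_map_P_mono_space inf_le_left W2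
            have h4 : (B i ⊓ K W1 : Submodule F (Fin n → F)) ⊓ K W2 = B i ⊓ K (W1 ∪ W2) := by
              rw [K_union, inf_assoc]
            rw [h4] at h2
            omega
      have hsumcov := Finset.sum_le_sum (fun i (_ : i ∈ univ) => hcov i)
      rw [Finset.sum_add_distrib, Finset.sum_add_distrib, sum_univ_ite, sum_univ_ite] at hsumcov
      omega

end PSB


section Glue

open Module Finset PSB

variable {F : Type*} [Field F] [DecidableEq F] {n : ℕ}

lemma mul_mem_powCode (C : Submodule F (Fin n → F)) {t : ℕ} (ht : 1 ≤ t)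
    {z y : Fin n → F} (hz : z ∈ powCode F C t) (hy : y ∈ C) :
    z * y ∈ powCode F C (t + 1) := by
  obtain ⟨t', rfl⟩ : ∃ t', t = t' + 1 := ⟨t - 1, by omega⟩
  show z * y ∈ prodCode F (powCode F C (t' + 1)) C
  exact Submodule.subset_span ⟨z, hz, y, hy, rfl⟩

lemma prod_mem_powCode (C : Submodule F (Fin n → F)) :
    ∀ (t : ℕ), 1 ≤ t → ∀ (c : Fin t → (Fin n → F)), (∀ i, c i ∈ C) →
      ∏ i, c i ∈ powCode F C t := by
  intro t
  induction t with
  | zero => omega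
  | succ t' IHt =>
    intro _ c hc
    by_cases h0 : t' = 0
    · subst h0
      rw [Fin.prod_univ_one]
      exact hc 0
    · rw [Fin.prod_univ_castSucc]
      exact mul_mem_powCode C (by omega)
        (IHt (by omega) (fun i => c i.castSucc) (fun i => hc _)) (hc (Fin.last t'))

theorem key_bound (C : Submodule F (Fin n → F)) (t d : ℕ)
    (ht : 1 ≤ t) (hd : t + 1 ≤ d) (hC : C ≠ ⊥)
    (hwt : ∀ z ∈ powCode F C t, z ≠ 0 → d ≤ hammingNorm z) :
    d + t * finrank F C ≤ n + t := by
  have hw : ∀ z ∈ prodFamily F (fun _ : Fin t => C), z ≠ 0 → d ≤ hammingNorm z := by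
    intro z hz hz0
    refine hwt z ?_ hz0
    have hle : prodFamily F (fun _ : Fin t => C) ≤ powCode F C t := by
      apply Submodule.span_le.2
      rintro w ⟨c, hc, rfl⟩
      exact prod_mem_powCode C t ht c hc
    exact hle hz
  have hmain := mainThm ((csupp C).card + t) t (csupp C) (fun _ => C) d le_rfl ht
    (fun _ => hC)
    (fun _ c hc j hj => eq_zero_of_notMem_csupp hc hj)
    (fun _ j hj => mem_csupp.1 hj)
    hd hw
  beta_reduce at hmain
  have hsum : ∑ _i : Fin t, finrank F C = t * finrank F C := by
    rw [Finset.sum_const, Finset.card_univ, Fintype.card_fin, smul_eq_mul]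
  have hcard : (csupp C).card ≤ n := by
    have := card_le_card (subset_univ (csupp C))
    rwa [Finset.card_univ, Fintype.card_fin] at this
  omega

variable [Fintype F]

lemma aFun_le {t nn d : ℕ} (ht : 1 ≤ t) (hd : t + 1 ≤ d) (hdn : d ≤ nn) :
    t * aFun F t nn d + d ≤ nn + t := by
  have hle : ∀ k ∈ {k | ∃ C : Submodule F (Fin nn → F), finrank F C = k ∧
      ∀ z ∈ powCode F C t, z ≠ 0 → d ≤ hammingNorm z}, k ≤ nn := by
    rintro k ⟨C, hC, -⟩
    rw [← hC]
    have := Submodule.finrank_le C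
    rwa [Module.finrank_pi, Fintype.card_fin] at this
  have hbdd : BddAbove {k | ∃ C : Submodule F (Fin nn → F), finrank F C = k ∧
      ∀ z ∈ powCode F C t, z ≠ 0 → d ≤ hammingNorm z} := ⟨nn, fun k hk => hle k hk⟩
  rcases Set.eq_empty_or_nonempty {k | ∃ C : Submodule F (Fin nn → F), finrank F C = k ∧
      ∀ z ∈ powCode F C t, z ≠ 0 → d ≤ hammingNorm z} with hs | hs
  · rw [aFun, hs, csSup_empty]
    simp only [Nat.bot_eq_zero]
    omega
  · have hmem := Nat.sSup_mem hs hbdd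
    obtain ⟨C, hCr, hCwt⟩ := hmem
    rw [aFun, ← hCr]
    by_cases hC : C = ⊥
    · rw [hC, finrank_bot]
      omega
    · have := key_bound C t d ht hd hC hCwt
      omega

lemma aFun_zero (t nn : ℕ) : aFun F t nn 0 = nn := by
  have htop : finrank F (⊤ : Submodule F (Fin nn → F)) = nn := by
    rw [finrank_top, Module.finrank_pi, Fintype.card_fin]
  have hle : ∀ k ∈ {k | ∃ C : Submodule F (Fin nn → F), finrank F C = k ∧
      ∀ z ∈ powCode F C t, z ≠ 0 → 0 ≤ hammingNorm z}, k ≤ nn := by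
    rintro k ⟨C, hC, -⟩
    rw [← hC]
    have := Submodule.finrank_le C
    rwa [Module.finrank_pi, Fintype.card_fin] at this
  have hmem : nn ∈ {k | ∃ C : Submodule F (Fin nn → F), finrank F C = k ∧
      ∀ z ∈ powCode F C t, z ≠ 0 → 0 ≤ hammingNorm z} :=
    ⟨⊤, htop, fun z _ _ => Nat.zero_le _⟩
  apply le_antisymm
  · exact csSup_le ⟨nn, hmem⟩ hle
  · exact le_csSup ⟨nn, fun k hk => hle k hk⟩ hmem

lemma alphaFun_zero (t : ℕ) : alphaFun F t 0 = 1 := by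
  have hev : (fun nn : ℕ => ((aFun F t nn ⌊(0:ℝ) * nn⌋₊ : ℝ)) / nn)
      =ᶠ[Filter.atTop] (fun _ => (1:ℝ)) := by
    rw [Filter.EventuallyEq, Filter.eventually_atTop]
    refine ⟨1, fun nn hn => ?_⟩
    have h0 : ⌊(0:ℝ) * (nn:ℝ)⌋₊ = 0 := by simp
    rw [h0, aFun_zero]
    exact div_self (by exact_mod_cast Nat.one_le_iff_ne_zero.1 hn)
  rw [alphaFun, Filter.limsup_congr hev, Filter.limsup_const]

lemma alpha_le {t : ℕ} (ht : 1 ≤ t) {δ : ℝ} (hδ0 : 0 < δ) (hδ1 : δ ≤ 1) :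
    alphaFun F t δ ≤ (1 - δ) / t := by
  obtain ⟨N, hN⟩ := exists_nat_ge ((t + 2 : ℝ) / δ)
  set u : ℕ → ℝ := fun nn : ℕ => (aFun F t nn ⌊δ * nn⌋₊ : ℝ) / nn with hu
  set w : ℕ → ℝ := fun nn : ℕ => (1 - δ)/t + (t+1)/(nn:ℝ) with hwdef
  have htpos : (0:ℝ) < t := by exact_mod_cast ht
  have hev : ∀ᶠ nn in Filter.atTop, u nn ≤ w nn := by
    rw [Filter.eventually_atTop]
    refine ⟨max N 1, fun nn hn => ?_⟩
    have hn1 : 1 ≤ nn := le_trans (le_max_right _ _) hn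
    have hnN : (N:ℝ) ≤ nn := Nat.cast_le.2 (le_trans (le_max_left _ _) hn)
    have hδn : (t + 2 : ℝ) ≤ δ * nn := by
      have h1 : (t + 2 : ℝ)/δ ≤ nn := le_trans hN hnN
      calc (t+2:ℝ) = ((t+2)/δ) * δ := by field_simp
        _ ≤ nn * δ := mul_le_mul_of_nonneg_right h1 (le_of_lt hδ0)
        _ = δ * nn := mul_comm _ _
    set d := ⌊δ * (nn:ℝ)⌋₊ with hddef
    have hd1 : t + 1 ≤ d := Nat.le_floor (by push_cast; linarith)
    have hdn : d ≤ nn := by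
      have hle : δ * nn ≤ (nn : ℝ) := by
        nlinarith [Nat.cast_nonneg (α := ℝ) nn]
      calc d ≤ ⌊(nn : ℝ)⌋₊ := Nat.floor_le_floor hle
        _ = nn := Nat.floor_natCast nn
    have hb := aFun_le (F := F) ht hd1 hdn
    have h2 : (t:ℝ) * (aFun F t nn d : ℝ) + d ≤ nn + t := by exact_mod_cast hb
    have hdr : δ * nn - 1 ≤ (d : ℝ) := by
      have := Nat.lt_floor_add_one (δ * (nn:ℝ))
      linarith
    have hnpos : (0:ℝ) < nn := by exact_mod_cast hn1
    have key : (aFun F t nn d : ℝ) * t ≤ (1-δ)*nn + (t+1) := by nlinarith [h2, hdr]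
    have key2 : (aFun F t nn d : ℝ) ≤ ((1-δ)*nn + (t+1))/t := by
      rw [le_div_iff₀ htpos]
      exact key
    show (aFun F t nn d : ℝ) / nn ≤ (1-δ)/t + (t+1)/nn
    rw [div_le_iff₀ hnpos]
    have hexp : ((1-δ)/t + (t+1)/(nn:ℝ)) * nn = (1-δ)*nn/t + (t+1) := by
      field_simp
    rw [hexp]
    calc (aFun F t nn d : ℝ) ≤ ((1-δ)*nn + (t+1))/t := key2
      _ = (1-δ)*nn/t + (t+1)/t := by ring
      _ ≤ (1-δ)*nn/t + (t+1) := by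
        have h3 : (t+1:ℝ)/t ≤ t+1 := by
          have ht1 : (1:ℝ) ≤ t := by exact_mod_cast ht
          rw [div_le_iff₀ htpos]
          nlinarith
        linarith
  have hw_tend : Filter.Tendsto w Filter.atTop (nhds ((1-δ)/t)) := by
    have h0 : Filter.Tendsto (fun nn : ℕ => (t+1:ℝ)/nn) Filter.atTop (nhds 0) :=
      tendsto_const_div_atTop_nhds_zero_nat (t+1:ℝ)
    have := Filter.Tendsto.const_add ((1-δ)/(t:ℝ)) h0
    simpa using this
  have hbdd : Filter.IsBoundedUnder (· ≤ ·) Filter.atTop w := hw_tend.isBoundedUnder_le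
  have hcob : Filter.IsCoboundedUnder (· ≤ ·) Filter.atTop u := by
    apply Filter.IsBoundedUnder.isCoboundedUnder_le
    refine Filter.isBoundedUnder_of ⟨0, fun nn => ?_⟩
    positivity
  calc alphaFun F t δ = Filter.limsup u Filter.atTop := rfl
    _ ≤ Filter.limsup w Filter.atTop := Filter.limsup_le_limsup hev hcob hbdd
    _ = (1-δ)/t := hw_tend.limsup_eq

end Glue


theorem stmt19 {F : Type*} [Field F] [Fintype F] [DecidableEq F] {t : ℕ}
    (ht : 1 ≤ t) :
    (∀ δ : ℝ, 0 < δ → δ ≤ 1 → alphaFun F t δ ≤ (1 - δ) / t) ∧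
    alphaFun F t 0 = 1 ∧
    (2 ≤ t → ¬ ContinuousAt (alphaFun F t) 0) := by
  refine ⟨fun δ h1 h2 => alpha_le (F := F) ht h1 h2, alphaFun_zero (F := F) t, fun h2t hcont => ?_⟩
  unfold ContinuousAt at hcont
  rw [alphaFun_zero (F := F) t] at hcont
  have hev : ∀ᶠ δ in nhds (0:ℝ), 1/2 < alphaFun F t δ :=
    hcont.eventually (eventually_gt_nhds (by norm_num))
  rw [Metric.eventually_nhds_iff] at hev
  obtain ⟨ε, hε, hball⟩ := hev
  set δ := min (ε/2) 1 with hδdef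
  have hδ0 : 0 < δ := lt_min (by linarith) one_pos
  have hδ1 : δ ≤ 1 := min_le_right _ _
  have hdist : dist δ 0 < ε := by
    rw [Real.dist_eq, sub_zero, abs_of_pos hδ0]
    calc δ ≤ ε/2 := min_le_left _ _
      _ < ε := by linarith
  have h1 := hball hdist
  have h2 := alpha_le (F := F) ht hδ0 hδ1
  have ht0 : (0:ℝ) < t := by
    have : (0:ℕ) < t := by omega
    exact_mod_cast this
  have ht2 : (2:ℝ) ≤ t := by exact_mod_cast h2t
  have h3 : (1-δ)/t ≤ 1/2 := by
    rw [div_le_iff₀ ht0]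
    nlinarith
  linarith

end
end
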